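/- arXiv:2210.05627 — 6 statements merged into one kernel-verified Lean document; each statement's English description precedes it below -/
import Mathlib

section
/- For every t ∈ [0,1], the probability that site 0 is occupied by time t equals (1 − e^{−2t})/2; that is, ℙ(O_0(t)) = (1 − e^{−2t})/2. (By translation invariance the same holds for ℙ(O_s(t)) for every s ∈ ℤ, so the density of occupied sites up to time t is ρ_t = (1 − e^{−2t})/2.) -/
open MeasureTheory Set

/-- `P` is the infinite product over `ℤ` of the uniform probability measure on `[0,1]`,
characterized by its values on cylinder sets. -/
def IsUniformProduct (P : Measure (ℤ → ℝ)) : Prop :=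
  ∀ (F : Finset ℤ) (A : ℤ → Set ℝ), (∀ i ∈ F, MeasurableSet (A i)) →
    P {T | ∀ i ∈ F, T i ∈ A i} = ∏ i ∈ F, (volume.restrict (Icc (0 : ℝ) 1)) (A i)

/-- The event `G_{jk}^s(t)`. -/
def G (t : ℝ) (s : ℤ) (j k : ℕ) : Set (ℤ → ℝ) :=
  {T | T s < t ∧
    (∀ i : ℕ, i < 2 * j → T (s - i - 1) < T (s - i)) ∧
    T (s - 2 * j) < T (s - 2 * j - 1) ∧
    (∀ i : ℕ, i < 2 * k → T (s + i + 1) < T (s + i)) ∧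
    T (s + 2 * k) < T (s + 2 * k + 1)}

/-- The event that site `s` is occupied by time `t`. -/
def O (t : ℝ) (s : ℤ) : Set (ℤ → ℝ) := ⋃ (j : ℕ) (k : ℕ), G t s j k

noncomputable section
namespace RSA

def μU : Measure ℝ := volume.restrict (Icc (0:ℝ) 1)
instance : IsProbabilityMeasure μU := ⟨by simp [μU, Real.volume_Icc]⟩

/-- chain set: `u > x 0 > x 1 > ... > x (m-1)` and `x m > x (m-1)`. -/
def S : (m : ℕ) → ℝ → Set (Fin (m+1) → ℝ)
  | 0, u => {x | u < x 0}
  | m+1, u => {x | x 0 < u ∧ (fun i => x i.succ) ∈ S m (x 0)}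

def Shat (m : ℕ) : Set (ℝ × (Fin (m+1) → ℝ)) := {p | p.2 ∈ S m p.1}

lemma measurableSet_Shat (m : ℕ) : MeasurableSet (Shat m) := by
  induction m with
  | zero =>
    have hm2 : Measurable fun p : ℝ × (Fin 1 → ℝ) => p.2 0 :=
      (measurable_pi_apply 0).comp measurable_snd
    exact measurableSet_lt measurable_fst hm2
  | succ m ih =>
    have hm2 : Measurable fun p : ℝ × (Fin (m+2) → ℝ) => p.2 0 :=
      (measurable_pi_apply 0).comp measurable_snd
    have h1 : MeasurableSet {p : ℝ × (Fin (m+2) → ℝ) | p.2 0 < p.1} :=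
      measurableSet_lt hm2 measurable_fst
    have hmap : Measurable (fun p : ℝ × (Fin (m+2) → ℝ) =>
        ((p.2 0, fun i : Fin (m+1) => p.2 i.succ) : ℝ × (Fin (m+1) → ℝ))) := by
      refine Measurable.prod ?_ ?_
      · exact hm2
      · exact measurable_pi_iff.mpr fun i => (measurable_pi_apply i.succ).comp measurable_snd
    have : Shat (m+1) = {p : ℝ × (Fin (m+2) → ℝ) | p.2 0 < p.1} ∩
        ((fun p : ℝ × (Fin (m+2) → ℝ) =>
          ((p.2 0, fun i : Fin (m+1) => p.2 i.succ) : ℝ × (Fin (m+1) → ℝ))) ⁻¹' Shat m) := by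
      ext p; simp [Shat, S]
    rw [this]
    exact h1.inter (ih.preimage hmap)

lemma measurableSet_S (m : ℕ) (u : ℝ) : MeasurableSet (S m u) :=
  (measurableSet_Shat m).preimage measurable_prodMk_left

def pfun (m : ℕ) (u : ℝ) : ℝ := u ^ m / m.factorial - u ^ (m+1) / (m+1).factorial

lemma pfun_cont (m : ℕ) : Continuous (pfun m) := by unfold pfun; fun_prop

lemma pfun_zero (u : ℝ) : pfun 0 u = 1 - u := by simp [pfun]

lemma pfun_nonneg {m : ℕ} {u : ℝ} (hu : u ∈ Icc (0:ℝ) 1) : 0 ≤ pfun m u := by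
  have h1 : u ^ (m+1) ≤ u ^ m := pow_le_pow_of_le_one hu.1 hu.2 (Nat.le_succ m)
  have h2 : (m.factorial : ℝ) ≤ (m+1).factorial := by
    exact_mod_cast Nat.factorial_le (Nat.le_succ m)
  have h3 : (0:ℝ) < m.factorial := by exact_mod_cast m.factorial_pos
  have := div_le_div₀ (pow_nonneg hu.1 m) h1 h3 h2
  simpa [pfun, sub_nonneg] using this

lemma integ_pfun (m : ℕ) (u : ℝ) : ∫ x in (0:ℝ)..u, pfun m x = pfun (m+1) u := by
  have h1 : (((m+1).factorial : ℝ)) = (m+1) * m.factorial := by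
    push_cast [Nat.factorial_succ]; ring
  have h2 : (((m+2).factorial : ℝ)) = (m+2) * (m+1).factorial := by
    rw [show m + 2 = (m+1) + 1 by ring, Nat.factorial_succ]; push_cast; ring
  have hi1 : IntervalIntegrable (fun x : ℝ => x ^ m / m.factorial) volume 0 u := by
    apply Continuous.intervalIntegrable; fun_prop
  have hi2 : IntervalIntegrable (fun x : ℝ => x ^ (m+1) / (m+1).factorial) volume 0 u := by
    apply Continuous.intervalIntegrable; fun_prop
  have h3 : (0:ℝ) < m.factorial := by exact_mod_cast m.factorial_pos
  have h4 : (0:ℝ) < (m+1).factorial := by exact_mod_cast (m+1).factorial_pos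
  have h5 : (0:ℝ) < (m+2).factorial := by exact_mod_cast (m+2).factorial_pos
  simp only [pfun]
  rw [intervalIntegral.integral_sub hi1 hi2, intervalIntegral.integral_div,
    intervalIntegral.integral_div, integral_pow, integral_pow]
  rw [h1, h2] at *
  field_simp
  push_cast
  ring

lemma Iio_inter {u : ℝ} (hu : u ∈ Icc (0:ℝ) 1) : Iio u ∩ Icc 0 1 = Ico 0 u := by
  ext x
  simp only [mem_inter_iff, mem_Iio, mem_Icc, mem_Ico]
  constructor
  · rintro ⟨h, h0, _⟩; exact ⟨h0, h⟩
  · rintro ⟨h0, h⟩; exact ⟨h, h0, h.le.trans hu.2⟩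

lemma measure_S (m : ℕ) : ∀ {u : ℝ}, u ∈ Icc (0:ℝ) 1 →
    Measure.pi (fun _ : Fin (m+1) => μU) (S m u) = ENNReal.ofReal (pfun m u) := by
  induction m with
  | zero =>
    intro u hu
    have h1 : S 0 u = univ.pi (fun _ : Fin 1 => Ioi u) := by
      ext x; simp [S, Fin.forall_fin_one]
    rw [h1, Measure.pi_pi]
    have h2 : μU (Ioi u) = ENNReal.ofReal (1 - u) := by
      rw [μU, Measure.restrict_apply measurableSet_Ioi]
      have : Ioi u ∩ Icc 0 1 = Ioc u 1 := by
        ext x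
        simp only [mem_inter_iff, mem_Ioi, mem_Icc, mem_Ioc]
        constructor
        · rintro ⟨h, _, h2⟩; exact ⟨h, h2⟩
        · rintro ⟨h, h2⟩; exact ⟨h, hu.1.trans h.le, h2⟩
      rw [this, Real.volume_Ioc]
    simp [h2, pfun_zero]
  | succ m ih =>
    intro u hu
    set πm := Measure.pi (fun _ : Fin (m+1) => μU) with hπm
    have mp := measurePreserving_piFinSuccAbove (fun _ : Fin (m+2) => μU) 0
    set W' : Set (ℝ × (Fin (m+1) → ℝ)) := {q | q.1 < u ∧ q.2 ∈ S m q.1} with hW'def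
    have hW' : MeasurableSet W' := by
      have : W' = {q : ℝ × (Fin (m+1) → ℝ) | q.1 < u} ∩ Shat m := rfl
      rw [this]
      exact (measurableSet_lt measurable_fst measurable_const).inter (measurableSet_Shat m)
    have hpre : S (m+1) u
        = (MeasurableEquiv.piFinSuccAbove (fun _ : Fin (m+2) => ℝ) 0) ⁻¹' W' := by
      ext x
      simp only [S, W', MeasurableEquiv.piFinSuccAbove_apply, Fin.removeNth,
        Fin.succAbove_zero, mem_setOf_eq, mem_preimage]
      exact Iff.rfl
    rw [hpre, mp.measure_preimage hW'.nullMeasurableSet]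
    rw [Measure.prod_apply hW']
    have hsec : ∀ a : ℝ, πm (Prod.mk a ⁻¹' W')
        = (Iio u).indicator (fun a => πm (S m a)) a := by
      intro a
      by_cases ha : a < u
      · have : Prod.mk a ⁻¹' W' = S m a := by ext y; simp [W', ha]
        rw [this, indicator_of_mem (mem_Iio.mpr ha)]
      · have : Prod.mk a ⁻¹' W' = ∅ := by ext y; simp [W', ha]
        rw [this, indicator_of_notMem (by simpa using ha)]
        simp
    rw [lintegral_congr hsec, lintegral_indicator measurableSet_Iio]
    have hres : μU.restrict (Iio u) = volume.restrict (Ico 0 u) := by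
      rw [μU, Measure.restrict_restrict measurableSet_Iio, Iio_inter hu]
    rw [hres]
    rw [setLIntegral_congr_fun measurableSet_Ico
      (fun a (ha : a ∈ Ico 0 u) => ih ⟨ha.1, ha.2.le.trans hu.2⟩)]
    have hint : Integrable (pfun m) (volume.restrict (Ico 0 u)) := by
      have : IntegrableOn (pfun m) (Icc 0 u) volume := (pfun_cont m).integrableOn_Icc
      exact this.mono_set Ico_subset_Icc_self
    have hnn : 0 ≤ᵐ[volume.restrict (Ico 0 u)] pfun m := by
      filter_upwards [ae_restrict_mem measurableSet_Ico] with a ha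
      exact pfun_nonneg ⟨ha.1, ha.2.le.trans hu.2⟩
    rw [← ofReal_integral_eq_lintegral_ofReal hint hnn]
    congr 1
    calc ∫ a in Ico 0 u, pfun m a = ∫ a in Ioo 0 u, pfun m a :=
          integral_Ico_eq_integral_Ioo
    _ = ∫ a in Ioc 0 u, pfun m a := integral_Ioc_eq_integral_Ioo.symm
    _ = ∫ a in (0:ℝ)..u, pfun m a := (intervalIntegral.integral_of_le hu.1).symm
    _ = pfun (m+1) u := integ_pfun m u

lemma S_iff (m : ℕ) (f : ℕ → ℝ) :
    ((fun i : Fin (m+1) => f ((i:ℕ)+1)) ∈ S m (f 0)) ↔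
      ((∀ i : ℕ, i < m → f (i+1) < f i) ∧ f m < f (m+1)) := by
  induction m generalizing f with
  | zero => simp [S]
  | succ m ih =>
    have key : ((fun i : Fin (m+2) => f ((i:ℕ)+1)) ∈ S (m+1) (f 0)) ↔
        (f 1 < f 0 ∧ ((∀ i : ℕ, i < m → f (i+2) < f (i+1)) ∧ f (m+1) < f (m+2))) := by
      simp only [S, mem_setOf_eq]
      constructor
      · rintro ⟨h0, h1⟩; exact ⟨h0, (ih (fun n => f (n+1))).mp h1⟩
      · rintro ⟨h0, h1⟩; exact ⟨h0, (ih (fun n => f (n+1))).mpr h1⟩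
    rw [key]
    constructor
    · rintro ⟨h0, h1, h2⟩
      refine ⟨fun i hi => ?_, h2⟩
      match i with
      | 0 => exact h0
      | (i+1) => exact h1 i (by omega)
    · rintro ⟨h1, h2⟩
      exact ⟨h1 0 (by omega), fun i hi => h1 (i+1) (by omega), h2⟩

lemma map_restrict {P : Measure (ℤ → ℝ)} (hP : IsUniformProduct P)
    {ι : Type} [Fintype ι] {e : ι → ℤ} (he : Function.Injective e) :
    P.map (fun T i => T (e i)) = Measure.pi (fun _ : ι => μU) := by
  classical
  have hmeas : Measurable (fun T : ℤ → ℝ => fun i => T (e i)) :=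
    measurable_pi_iff.mpr fun i => measurable_pi_apply (e i)
  refine (Measure.pi_eq fun A hA => ?_).symm
  rw [Measure.map_apply hmeas (MeasurableSet.univ_pi hA)]
  set A' : ℤ → Set ℝ := fun s => if h : ∃ i, e i = s then A h.choose else univ with hA'
  have hAe : ∀ i : ι, A' (e i) = A i := by
    intro i
    have h : ∃ j, e j = e i := ⟨i, rfl⟩
    simp only [hA', dif_pos h]
    exact congrArg A (he h.choose_spec)
  have hpre : (fun T : ℤ → ℝ => fun i => T (e i)) ⁻¹' (univ.pi A)
      = {T | ∀ s ∈ Finset.image e Finset.univ, T s ∈ A' s} := by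
    ext T
    simp only [mem_preimage, mem_univ_pi, mem_setOf_eq, Finset.mem_image, Finset.mem_univ,
      true_and]
    constructor
    · rintro h s ⟨i, rfl⟩; rw [hAe]; exact h i
    · intro h i; rw [← hAe]; exact h (e i) ⟨i, rfl⟩
  rw [hpre, hP (Finset.image e Finset.univ) A' ?_]
  · rw [Finset.prod_image (fun a _ b _ hab => he hab)]
    simp only [hAe]
    rfl
  · intro s hs
    simp only [Finset.mem_image, Finset.mem_univ, true_and] at hs
    obtain ⟨i, rfl⟩ := hs
    rw [hAe]; exact hA i

/-- the target set in the factorized space -/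
def Wset (t : ℝ) (a b : ℕ) : Set (ℝ × (Fin (a+1) → ℝ) × (Fin (b+1) → ℝ)) :=
  {q | q.1 < t ∧ q.2.1 ∈ S a q.1 ∧ q.2.2 ∈ S b q.1}

lemma measurableSet_Wset (t : ℝ) (a b : ℕ) : MeasurableSet (Wset t a b) := by
  have h1 : MeasurableSet {q : ℝ × (Fin (a+1) → ℝ) × (Fin (b+1) → ℝ) | q.1 < t} :=
    measurableSet_lt measurable_fst measurable_const
  have h2 : MeasurableSet {q : ℝ × (Fin (a+1) → ℝ) × (Fin (b+1) → ℝ) | q.2.1 ∈ S a q.1} := by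
    have : Measurable (fun q : ℝ × (Fin (a+1) → ℝ) × (Fin (b+1) → ℝ) =>
        ((q.1, q.2.1) : ℝ × (Fin (a+1) → ℝ))) :=
      measurable_fst.prodMk (measurable_fst.comp measurable_snd)
    exact (measurableSet_Shat a).preimage this
  have h3 : MeasurableSet {q : ℝ × (Fin (a+1) → ℝ) × (Fin (b+1) → ℝ) | q.2.2 ∈ S b q.1} := by
    have : Measurable (fun q : ℝ × (Fin (a+1) → ℝ) × (Fin (b+1) → ℝ) =>
        ((q.1, q.2.2) : ℝ × (Fin (b+1) → ℝ))) :=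
      measurable_fst.prodMk (measurable_snd.comp measurable_snd)
    exact (measurableSet_Shat b).preimage this
  exact h1.inter (h2.inter h3)

lemma measure_Wset {t : ℝ} (ht : t ∈ Icc (0:ℝ) 1) (a b : ℕ) :
    (μU.prod ((Measure.pi fun _ : Fin (a+1) => μU).prod
        (Measure.pi fun _ : Fin (b+1) => μU))) (Wset t a b)
      = ∫⁻ u in Ico (0:ℝ) t, ENNReal.ofReal (pfun a u * pfun b u) := by
  set ν := (Measure.pi fun _ : Fin (a+1) => μU).prod (Measure.pi fun _ : Fin (b+1) => μU)
  rw [Measure.prod_apply (measurableSet_Wset t a b)]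
  have hsec : ∀ u : ℝ, ν (Prod.mk u ⁻¹' Wset t a b)
      = (Iio t).indicator (fun u =>
          (Measure.pi fun _ : Fin (a+1) => μU) (S a u) *
          (Measure.pi fun _ : Fin (b+1) => μU) (S b u)) u := by
    intro u
    by_cases hu : u < t
    · have : Prod.mk u ⁻¹' Wset t a b = (S a u) ×ˢ (S b u) := by
        ext y; simp [Wset, hu]
      rw [this, indicator_of_mem (mem_Iio.mpr hu), Measure.prod_prod]
    · have : Prod.mk u ⁻¹' Wset t a b = ∅ := by ext y; simp [Wset, hu]
      rw [this, indicator_of_notMem (by simpa using hu)]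
      simp
  rw [lintegral_congr hsec, lintegral_indicator measurableSet_Iio]
  have hres : μU.restrict (Iio t) = volume.restrict (Ico 0 t) := by
    rw [μU, Measure.restrict_restrict measurableSet_Iio, Iio_inter ht]
  rw [hres]
  refine setLIntegral_congr_fun measurableSet_Ico (fun u hu => ?_)
  have hu1 : u ∈ Icc (0:ℝ) 1 := ⟨hu.1, hu.2.le.trans ht.2⟩
  rw [measure_S a hu1, measure_S b hu1,
    ← ENNReal.ofReal_mul (pfun_nonneg hu1)]

/-- The index type for the coordinates involved in `G t 0 j k`. -/
abbrev Idx (a b : ℕ) : Type := Unit ⊕ (Fin (a+1) ⊕ Fin (b+1))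

def eIdx (a b : ℕ) : Idx a b → ℤ
  | .inl _ => 0
  | .inr (.inl i) => -((i:ℕ)+1)
  | .inr (.inr i) => ((i:ℕ)+1)

lemma eIdx_inj (a b : ℕ) : Function.Injective (eIdx a b) := by
  rintro (⟨⟩ | i | i) (⟨⟩ | i' | i') h <;> simp only [eIdx] at h
  · rfl
  · exfalso; omega
  · exfalso; omega
  · exfalso; omega
  · have : i = i' := Fin.ext (by omega)
    rw [this]
  · exfalso; omega
  · exfalso; omega
  · exfalso; omega
  · have : i = i' := Fin.ext (by omega)
    rw [this]

lemma Tcongr (T : ℤ → ℝ) {x x' y y' : ℤ} (hx : x = x') (hy : y = y')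
    (h : T x < T y) : T x' < T y' := by rw [← hx, ← hy]; exact h

lemma Scongr {m : ℕ} {u u' : ℝ} (hu : u = u') {x x' : Fin (m+1) → ℝ}
    (hx : ∀ i, x i = x' i) (h : x ∈ S m u) : x' ∈ S m u' := by
  rw [← hu, ← (funext hx : x = x')]; exact h

lemma P_G {P : Measure (ℤ → ℝ)} (hP : IsUniformProduct P) {t : ℝ}
    (ht : t ∈ Icc (0:ℝ) 1) (j k : ℕ) :
    MeasurableSet (G t 0 j k) ∧
    P (G t 0 j k) = ∫⁻ u in Ico (0:ℝ) t, ENNReal.ofReal (pfun (2*j) u * pfun (2*k) u) := by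
  classical
  set g : (ℤ → ℝ) → (Idx (2*j) (2*k) → ℝ) := fun T i => T (eIdx (2*j) (2*k) i) with hg
  have hgmeas : Measurable g := measurable_pi_iff.mpr fun i => measurable_pi_apply _
  have mpg : MeasurePreserving g P (Measure.pi fun _ : Idx (2*j) (2*k) => μU) :=
    ⟨hgmeas, map_restrict hP (eIdx_inj (2*j) (2*k))⟩
  have mp1 := measurePreserving_sumPiEquivProdPi (X := fun _ : Idx (2*j) (2*k) => ℝ)
    (fun _ => μU)
  have mp2a := measurePreserving_funUnique (β := ℝ) μU Unit
  have mp2b := measurePreserving_sumPiEquivProdPi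
    (X := fun _ : Fin (2*j+1) ⊕ Fin (2*k+1) => ℝ) (fun _ => μU)
  have mp2 := mp2a.prod mp2b
  set Φ : (ℤ → ℝ) → ℝ × (Fin (2*j+1) → ℝ) × (Fin (2*k+1) → ℝ) :=
    (Prod.map (MeasurableEquiv.funUnique Unit ℝ)
      (MeasurableEquiv.sumPiEquivProdPi (fun _ : Fin (2*j+1) ⊕ Fin (2*k+1) => ℝ))) ∘
      (MeasurableEquiv.sumPiEquivProdPi (fun _ : Idx (2*j) (2*k) => ℝ)) ∘ g with hΦ
  have mpΦ : MeasurePreserving Φ P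
      (μU.prod ((Measure.pi fun _ : Fin (2*j+1) => μU).prod
        (Measure.pi fun _ : Fin (2*k+1) => μU))) := (mp2.comp mp1).comp mpg
  have hGW : G t 0 j k = Φ ⁻¹' Wset t (2*j) (2*k) := by
    ext T
    have hΦT : Φ T = (T 0,
        (fun i : Fin (2*j+1) => T (eIdx (2*j) (2*k) (.inr (.inl i)))),
        (fun i : Fin (2*k+1) => T (eIdx (2*j) (2*k) (.inr (.inr i))))) := rfl
    rw [mem_preimage, hΦT]
    simp only [Wset, mem_setOf_eq, eIdx, G]
    constructor
    · rintro ⟨h1, h2, h3, h4, h5⟩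
      refine ⟨h1, ?_, ?_⟩
      · refine Scongr (congrArg T (by norm_num))
          (fun i => congrArg T (by push_cast; ring))
          ((S_iff (2*j) (fun n : ℕ => T (-(n:ℤ)))).mpr ⟨?_, ?_⟩)
        · exact fun i hi => Tcongr T (by push_cast; ring) (by push_cast; ring) (h2 i hi)
        · exact Tcongr T (by push_cast; ring) (by push_cast; ring) h3
      · refine Scongr (congrArg T (by norm_num))
          (fun i => congrArg T (by push_cast; ring))
          ((S_iff (2*k) (fun n : ℕ => T (n:ℤ))).mpr ⟨?_, ?_⟩)
        · exact fun i hi => Tcongr T (by push_cast; ring) (by push_cast; ring) (h4 i hi)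
        · exact Tcongr T (by push_cast; ring) (by push_cast; ring) h5
    · rintro ⟨h1, h2, h3⟩
      have hl := (S_iff (2*j) (fun n : ℕ => T (-(n:ℤ)))).mp
        (Scongr (congrArg T (by norm_num))
          (fun i => congrArg T (by push_cast; ring)) h2)
      have hr := (S_iff (2*k) (fun n : ℕ => T (n:ℤ))).mp
        (Scongr (congrArg T (by norm_num))
          (fun i => congrArg T (by push_cast; ring)) h3)
      refine ⟨h1, ?_, ?_, ?_, ?_⟩
      · exact fun i hi => Tcongr T (by push_cast; ring) (by push_cast; ring) (hl.1 i hi)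
      · exact Tcongr T (by push_cast; ring) (by push_cast; ring) hl.2
      · exact fun i hi => Tcongr T (by push_cast; ring) (by push_cast; ring) (hr.1 i hi)
      · exact Tcongr T (by push_cast; ring) (by push_cast; ring) hr.2
  constructor
  · rw [hGW]
    exact (measurableSet_Wset t (2*j) (2*k)).preimage mpΦ.measurable
  · rw [hGW, mpΦ.measure_preimage (measurableSet_Wset t (2*j) (2*k)).nullMeasurableSet,
      measure_Wset ht (2*j) (2*k)]


lemma G_disjoint (t : ℝ) : Pairwise (Function.onFun Disjoint
    (fun p : ℕ × ℕ => G t 0 p.1 p.2)) := by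
  rintro ⟨j, k⟩ ⟨j', k'⟩ hne
  rw [Function.onFun, Set.disjoint_left]
  intro T hT hT'
  obtain ⟨_, h2, h3, h4, h5⟩ := hT
  obtain ⟨_, h2', h3', h4', h5'⟩ := hT'
  rcases Nat.lt_trichotomy j j' with hj | hj | hj
  · have ha := h2' (2*j) (by omega)
    have hb := h3
    exact lt_asymm (Tcongr T (by push_cast; ring) (by push_cast; ring) ha) hb
  · subst hj
    have hk : k ≠ k' := by
      intro h; exact hne (by rw [h])
    rcases Nat.lt_trichotomy k k' with h | h | h
    · have ha := h4' (2*k) (by omega)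
      have hb := h5
      exact lt_asymm (Tcongr T (by push_cast; ring) (by push_cast; ring) ha) hb
    · exact hk h
    · have ha := h4 (2*k') (by omega)
      have hb := h5'
      exact lt_asymm (Tcongr T (by push_cast; ring) (by push_cast; ring) ha) hb
  · have ha := h2 (2*j') (by omega)
    have hb := h3'
    exact lt_asymm (Tcongr T (by push_cast; ring) (by push_cast; ring) ha) hb

lemma tsum_pfun {u : ℝ} (hu : u ∈ Icc (0:ℝ) 1) :
    ∑' p : ℕ × ℕ, ENNReal.ofReal (pfun (2*p.1) u * pfun (2*p.2) u)
      = ENNReal.ofReal (Real.exp (-2*u)) := by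
  set aa : ℕ → ℝ := fun n => (-u)^n / n.factorial with haa
  have hsum : Summable aa := Real.summable_pow_div_factorial (-u)
  have h2inj : Function.Injective (fun x : ℕ => 2*x) := fun x y h => by
    dsimp at h; omega
  have h2inj' : Function.Injective (fun x : ℕ => 2*x+1) := fun x y h => by
    dsimp at h; omega
  have heven : Summable (fun i => aa (2*i)) := hsum.comp_injective h2inj
  have hodd : Summable (fun i => aa (2*i+1)) := hsum.comp_injective h2inj'
  have hpf : ∀ i : ℕ, pfun (2*i) u = aa (2*i) + aa (2*i+1) := by
    intro i
    have he : (-u)^(2*i) = u^(2*i) := Even.neg_pow ⟨i, by ring⟩ u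
    have ho : (-u)^(2*i+1) = -(u^(2*i+1)) := Odd.neg_pow ⟨i, by ring⟩ u
    simp only [pfun, haa, he, ho]
    ring
  have hS : Summable (fun i => pfun (2*i) u) := by
    rw [show (fun i => pfun (2*i) u) = fun i => aa (2*i) + aa (2*i+1) from funext hpf]
    exact heven.add hodd
  have hsumval : ∑' i, pfun (2*i) u = Real.exp (-u) := by
    calc ∑' i, pfun (2*i) u = ∑' i, (aa (2*i) + aa (2*i+1)) := tsum_congr hpf
    _ = (∑' i, aa (2*i)) + ∑' i, aa (2*i+1) := Summable.tsum_add heven hodd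
    _ = ∑' n, aa n := tsum_even_add_odd heven hodd
    _ = Real.exp (-u) := by
        rw [Real.exp_eq_exp_ℝ, NormedSpace.exp_eq_tsum_div]
  calc ∑' p : ℕ×ℕ, ENNReal.ofReal (pfun (2*p.1) u * pfun (2*p.2) u)
      = ∑' p : ℕ×ℕ, ENNReal.ofReal (pfun (2*p.1) u) * ENNReal.ofReal (pfun (2*p.2) u) :=
        tsum_congr fun p => ENNReal.ofReal_mul (pfun_nonneg hu)
    _ = ∑' (i : ℕ) (l : ℕ), ENNReal.ofReal (pfun (2*i) u) * ENNReal.ofReal (pfun (2*l) u) :=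
        ENNReal.tsum_prod (f := fun i l => ENNReal.ofReal (pfun (2*i) u) * ENNReal.ofReal (pfun (2*l) u))
    _ = (∑' i : ℕ, ENNReal.ofReal (pfun (2*i) u)) * ∑' l : ℕ, ENNReal.ofReal (pfun (2*l) u) := by
        simp_rw [ENNReal.tsum_mul_left]
        rw [ENNReal.tsum_mul_right]
    _ = ENNReal.ofReal (Real.exp (-u)) * ENNReal.ofReal (Real.exp (-u)) := by
        rw [← ENNReal.ofReal_tsum_of_nonneg (fun i => pfun_nonneg hu) hS, hsumval]
    _ = ENNReal.ofReal (Real.exp (-2*u)) := by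
        rw [← ENNReal.ofReal_mul (Real.exp_nonneg _), ← Real.exp_add]
        ring_nf

end RSA

theorem density_occupied (P : Measure (ℤ → ℝ)) (hP : IsUniformProduct P)
    (t : ℝ) (ht : t ∈ Icc (0 : ℝ) 1) :
    (P (O t 0)).toReal = (1 - Real.exp (-2 * t)) / 2 := by
  classical
  have hO : O t 0 = ⋃ p : ℕ × ℕ, G t 0 p.1 p.2 := by
    ext T; simp only [O, mem_iUnion, Prod.exists]
  have hPG := fun p : ℕ × ℕ => RSA.P_G hP ht p.1 p.2
  rw [hO, measure_iUnion (RSA.G_disjoint t) (fun p => (hPG p).1)]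
  rw [tsum_congr (fun p : ℕ × ℕ => (hPG p).2)]
  have hmeasf : ∀ p : ℕ × ℕ, AEMeasurable
      (fun u => ENNReal.ofReal (RSA.pfun (2*p.1) u * RSA.pfun (2*p.2) u))
      (volume.restrict (Ico (0:ℝ) t)) := fun p =>
    (ENNReal.measurable_ofReal.comp
      ((RSA.pfun_cont (2*p.1)).mul (RSA.pfun_cont (2*p.2))).measurable).aemeasurable
  rw [← lintegral_tsum hmeasf]
  rw [setLIntegral_congr_fun measurableSet_Ico
    (fun u (hu : u ∈ Ico 0 t) =>
      RSA.tsum_pfun ⟨hu.1, hu.2.le.trans ht.2⟩)]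
  have hint : Integrable (fun u : ℝ => Real.exp (-2*u)) (volume.restrict (Ico 0 t)) := by
    have : IntegrableOn (fun u : ℝ => Real.exp (-2*u)) (Icc 0 t) volume := by
      apply Continuous.integrableOn_Icc; fun_prop
    exact this.mono_set Ico_subset_Icc_self
  have hnn : 0 ≤ᵐ[volume.restrict (Ico (0:ℝ) t)] fun u : ℝ => Real.exp (-2*u) :=
    ae_of_all _ fun u => (Real.exp_nonneg _)
  rw [← ofReal_integral_eq_lintegral_ofReal hint hnn]
  have hval : ∫ u in Ico (0:ℝ) t, Real.exp (-2*u) = (1 - Real.exp (-2*t)) / 2 := by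
    calc ∫ u in Ico (0:ℝ) t, Real.exp (-2*u)
        = ∫ u in Ioo (0:ℝ) t, Real.exp (-2*u) := integral_Ico_eq_integral_Ioo
    _ = ∫ u in Ioc (0:ℝ) t, Real.exp (-2*u) := integral_Ioc_eq_integral_Ioo.symm
    _ = ∫ u in (0:ℝ)..t, Real.exp (-2*u) := (intervalIntegral.integral_of_le ht.1).symm
    _ = (1 - Real.exp (-2*t)) / 2 := by
        rw [intervalIntegral.integral_comp_mul_left (fun x => Real.exp x)
          (by norm_num : (-2:ℝ) ≠ 0)]
        rw [integral_exp]
        simp [Real.exp_zero]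
        ring
  rw [hval, ENNReal.toReal_ofReal]
  have : Real.exp (-2*t) ≤ 1 := Real.exp_le_one_iff.mpr (by nlinarith [ht.1])
  linarith
end
end

section
/- For every t ∈ [0,1] and all integers m, n ≥ 0, ℙ(H_{−m}(t) ∩ H_n(t)) = t^{m+n+1}/(m! · n! · (m+n+1)). -/
open MeasureTheory Set

/-- The event `H_{-m}(t) = {t₀ < t} ∩ {t₀ > t₋₁ > ⋯ > t₋ₘ}`. -/
def Hneg (t : ℝ) (m : ℕ) : Set (ℤ → ℝ) :=
  {T | T 0 < t ∧ ∀ i : ℕ, i < m → T (-(i : ℤ) - 1) < T (-(i : ℤ))}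

/-- The event `H_n(t) = {t₀ < t} ∩ {t₀ > t₁ > ⋯ > tₙ}`. -/
def Hpos (t : ℝ) (n : ℕ) : Set (ℤ → ℝ) :=
  {T | T 0 < t ∧ ∀ i : ℕ, i < n → T ((i : ℤ) + 1) < T (i : ℤ)}

noncomputable section ProverAux

/-- uniform measure on [0,1] -/
def μ0 : Measure ℝ := volume.restrict (Icc 0 1)

instance : IsProbabilityMeasure μ0 :=
  ⟨by rw [μ0, Measure.restrict_apply_univ, Real.volume_Icc]; norm_num⟩

/-- decreasing chain of length k with top < s -/
def Cset (k : ℕ) (s : ℝ) : Set (Fin k → ℝ) :=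
  {y | (∀ i : ℕ, ∀ h : i + 1 < k, y ⟨i + 1, h⟩ < y ⟨i, by omega⟩) ∧ ∀ h : 0 < k, y ⟨0, h⟩ < s}

lemma measurableSet_Cset (k : ℕ) (s : ℝ) : MeasurableSet (Cset k s) := by
  unfold Cset
  rw [Set.setOf_and]
  refine MeasurableSet.inter ?_ ?_
  · rw [Set.setOf_forall]
    refine MeasurableSet.iInter fun i => ?_
    rw [Set.setOf_forall]
    exact MeasurableSet.iInter fun h =>
      measurableSet_lt (measurable_pi_apply _) (measurable_pi_apply _)
  · rw [Set.setOf_forall]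
    exact MeasurableSet.iInter fun h =>
      measurableSet_lt (measurable_pi_apply _) measurable_const

lemma key_integral (k : ℕ) (c : ℝ) (hc : 0 < c) {t : ℝ} (ht : t ∈ Icc (0:ℝ) 1) :
    ∫⁻ s, (Iio t).indicator (fun s => ENNReal.ofReal (s ^ k / c)) s ∂μ0
      = ENNReal.ofReal (t ^ (k + 1) / ((k + 1 : ℝ) * c)) := by
  have hset : Iio t ∩ Icc (0:ℝ) 1 = Ico 0 t := by
    ext x
    simp only [mem_inter_iff, mem_Iio, mem_Icc, mem_Ico]
    constructor
    · rintro ⟨h1, h2, h3⟩; exact ⟨h2, h1⟩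
    · rintro ⟨h1, h2⟩; exact ⟨h2, h1, le_of_lt (lt_of_lt_of_le h2 ht.2)⟩
  rw [lintegral_indicator measurableSet_Iio, μ0, Measure.restrict_restrict measurableSet_Iio,
    hset, Measure.restrict_congr_set Ico_ae_eq_Ioc]
  have hint : Integrable (fun s : ℝ => s ^ k / c) (volume.restrict (Ioc 0 t)) :=
    ((continuous_pow k).div_const c).integrableOn_Icc.mono_set Ioc_subset_Icc_self
  have hnn : 0 ≤ᵐ[volume.restrict (Ioc (0:ℝ) t)] fun s : ℝ => s ^ k / c := by
    filter_upwards [ae_restrict_mem measurableSet_Ioc] with s hs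
    exact div_nonneg (pow_nonneg hs.1.le k) hc.le
  rw [← ofReal_integral_eq_lintegral_ofReal hint hnn, ← intervalIntegral.integral_of_le ht.1]
  congr 1
  simp_rw [div_eq_mul_inv]
  rw [intervalIntegral.integral_mul_const, integral_pow, zero_pow (by omega : k + 1 ≠ 0),
    sub_zero, mul_inv, ← mul_assoc, div_eq_mul_inv]

lemma happ {N : ℕ} (x : Fin (N + 1) → ℝ) :
    (MeasurableEquiv.piFinSuccAbove (fun _ : Fin (N + 1) => ℝ) 0) x = (x 0, fun j => x j.succ) :=
  rfl

lemma chain_meas (k : ℕ) : ∀ {s : ℝ}, s ∈ Icc (0:ℝ) 1 →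
    Measure.pi (fun _ : Fin k => μ0) (Cset k s)
      = ENNReal.ofReal (s ^ k / k.factorial) := by
  induction k with
  | zero =>
    intro s hs
    have h1 : Cset 0 s = univ := by
      ext y
      simp only [Cset, mem_setOf_eq, mem_univ, iff_true]
      exact ⟨fun i h => absurd h (by omega), fun h => absurd h (by omega)⟩
    rw [h1, measure_univ]
    simp [Nat.factorial]
  | succ k ih =>
    intro s hs
    have mp := measurePreserving_piFinSuccAbove (fun _ : Fin (k + 1) => μ0) 0
    set D : Set (ℝ × (Fin k → ℝ)) := {p | p.1 < s ∧ p.2 ∈ Cset k p.1} with hD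
    have hDm : MeasurableSet D := by
      have hsplit : D = {p : ℝ × (Fin k → ℝ) | p.1 < s} ∩
          ((⋂ (i : ℕ), ⋂ (h : i + 1 < k),
              {p : ℝ × (Fin k → ℝ) | p.2 ⟨i + 1, h⟩ < p.2 ⟨i, by omega⟩}) ∩
            (⋂ (h : 0 < k), {p : ℝ × (Fin k → ℝ) | p.2 ⟨0, h⟩ < p.1})) := by
        ext p
        simp only [hD, Cset, mem_setOf_eq, mem_inter_iff, mem_iInter]
      rw [hsplit]
      refine (measurableSet_lt measurable_fst measurable_const).inter (MeasurableSet.inter ?_ ?_)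
      · exact MeasurableSet.iInter fun i => MeasurableSet.iInter fun h =>
          measurableSet_lt measurable_snd.eval measurable_snd.eval
      · exact MeasurableSet.iInter fun h =>
          measurableSet_lt measurable_snd.eval measurable_fst
    have hpre : Cset (k + 1) s
        = (MeasurableEquiv.piFinSuccAbove (fun _ : Fin (k + 1) => ℝ) 0) ⁻¹' D := by
      ext x
      rw [mem_preimage, happ]
      simp only [hD, Cset, mem_setOf_eq]
      constructor
      · rintro ⟨h1, h2⟩
        refine ⟨h2 (by omega), fun i h => ?_, fun h => ?_⟩
        · have := h1 (i + 1) (by omega)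
          convert this using 2 <;> try rw [Fin.succ_mk]
        · have := h1 0 (by omega)
          convert this using 2
          try rw [Fin.succ_mk]
          exact Fin.ext (by simp)
      · rintro ⟨h1, ⟨h2, h3⟩⟩
        refine ⟨fun i h => ?_, fun h => ?_⟩
        · rcases Nat.eq_zero_or_pos i with hi | hi
          · subst hi
            have := h3 (by omega)
            convert this using 2
            try rw [Fin.succ_mk]
            exact Fin.ext (by simp)
          · obtain ⟨i', rfl⟩ := Nat.exists_eq_add_of_lt hi
            simp only [Nat.zero_add] at *
            have := h2 i' (by omega)
            convert this using 2 <;> try rw [Fin.succ_mk]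
        · exact h1
    rw [hpre, mp.measure_preimage_equiv]
    rw [Measure.prod_apply hDm]
    have hsec : ∀ a : ℝ, (Measure.pi fun _ : Fin k => μ0) (Prod.mk a ⁻¹' D)
        = (Iio s).indicator (fun a => (Measure.pi fun _ : Fin k => μ0) (Cset k a)) a := by
      intro a
      by_cases ha : a < s
      · rw [indicator_of_mem (mem_Iio.mpr ha)]
        congr 1
        ext y
        simp [hD, ha]
      · rw [indicator_of_notMem (by simpa using ha)]
        have : Prod.mk a ⁻¹' D = ∅ := by
          ext y; simp [hD, ha]
        rw [this, measure_empty]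
    simp_rw [hsec]
    have hae : (fun a => (Iio s).indicator
          (fun a => (Measure.pi fun _ : Fin k => μ0) (Cset k a)) a)
        =ᵐ[μ0] fun a => (Iio s).indicator
          (fun a => ENNReal.ofReal (a ^ k / k.factorial)) a := by
      have : ∀ᵐ a ∂μ0, a ∈ Icc (0:ℝ) 1 := ae_restrict_mem measurableSet_Icc
      filter_upwards [this] with a ha
      by_cases h' : a ∈ Iio s
      · rw [indicator_of_mem h', indicator_of_mem h', ih ha]
      · rw [indicator_of_notMem h', indicator_of_notMem h']
    rw [lintegral_congr_ae hae, key_integral k _ (by positivity) ⟨hs.1, hs.2⟩]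
    congr 1
    rw [Nat.factorial_succ]
    push_cast
    ring

/-- two chains, left on coordinates `< m`, right on coordinates `≥ m`, both tops `< s` -/
def Sset (m n : ℕ) (s : ℝ) : Set (Fin (m + n) → ℝ) :=
  {y | ((∀ i : ℕ, ∀ h : i + 1 < m, y ⟨i + 1, by omega⟩ < y ⟨i, by omega⟩) ∧
      ∀ h : 0 < m, y ⟨0, by omega⟩ < s) ∧
    ((∀ i : ℕ, ∀ h : i + 1 < n, y ⟨m + (i + 1), by omega⟩ < y ⟨m + i, by omega⟩) ∧
      ∀ h : 0 < n, y ⟨m + 0, by omega⟩ < s)}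

lemma Sset_eq (m n : ℕ) (s : ℝ) :
    Sset m n s = (⇑(MeasurableEquiv.piCongrLeft (fun _ : Fin (m + n) => ℝ) finSumFinEquiv).symm) ⁻¹'
      (⇑(MeasurableEquiv.sumPiEquivProdPi (fun _ : Fin m ⊕ Fin n => ℝ)) ⁻¹' (Cset m s ×ˢ Cset n s)) :=
  rfl

lemma Sset_val (m n : ℕ) (s : ℝ) :
    Measure.pi (fun _ : Fin (m + n) => μ0) (Sset m n s)
      = Measure.pi (fun _ : Fin m => μ0) (Cset m s) * Measure.pi (fun _ : Fin n => μ0) (Cset n s) := by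
  have mp1 := (measurePreserving_piCongrLeft (fun _ : Fin (m + n) => μ0) finSumFinEquiv).symm
    (MeasurableEquiv.piCongrLeft (fun _ : Fin (m + n) => ℝ) finSumFinEquiv)
  have mp2 := measurePreserving_sumPiEquivProdPi (fun _ : Fin m ⊕ Fin n => μ0)
  rw [Sset_eq, mp1.measure_preimage_equiv, mp2.measure_preimage_equiv, Measure.prod_prod]

def DJ (m n : ℕ) (t : ℝ) : Set (ℝ × (Fin (m + n) → ℝ)) :=
  {p | p.1 < t ∧ p.2 ∈ Sset m n p.1}

lemma measurableSet_DJ (m n : ℕ) (t : ℝ) : MeasurableSet (DJ m n t) := by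
  have hsplit : DJ m n t = {p : ℝ × (Fin (m + n) → ℝ) | p.1 < t} ∩
      (((⋂ (i : ℕ), ⋂ (h : i + 1 < m),
          {p : ℝ × (Fin (m + n) → ℝ) | p.2 ⟨i + 1, by omega⟩ < p.2 ⟨i, by omega⟩}) ∩
        (⋂ (h : 0 < m), {p : ℝ × (Fin (m + n) → ℝ) | p.2 ⟨0, by omega⟩ < p.1})) ∩
      ((⋂ (i : ℕ), ⋂ (h : i + 1 < n),
          {p : ℝ × (Fin (m + n) → ℝ) | p.2 ⟨m + (i + 1), by omega⟩ < p.2 ⟨m + i, by omega⟩}) ∩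
        (⋂ (h : 0 < n), {p : ℝ × (Fin (m + n) → ℝ) | p.2 ⟨m + 0, by omega⟩ < p.1}))) := by
    ext p
    simp only [DJ, Sset, mem_setOf_eq, mem_inter_iff, mem_iInter]
  rw [hsplit]
  refine (measurableSet_lt measurable_fst measurable_const).inter
    (MeasurableSet.inter (MeasurableSet.inter ?_ ?_) (MeasurableSet.inter ?_ ?_))
  · exact MeasurableSet.iInter fun i => MeasurableSet.iInter fun h =>
      measurableSet_lt measurable_snd.eval measurable_snd.eval
  · exact MeasurableSet.iInter fun h => measurableSet_lt measurable_snd.eval measurable_fst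
  · exact MeasurableSet.iInter fun i => MeasurableSet.iInter fun h =>
      measurableSet_lt measurable_snd.eval measurable_snd.eval
  · exact MeasurableSet.iInter fun h => measurableSet_lt measurable_snd.eval measurable_fst

def E1 (m n : ℕ) (t : ℝ) : Set (Fin (m + n + 1) → ℝ) :=
  (MeasurableEquiv.piFinSuccAbove (fun _ : Fin (m + n + 1) => ℝ) 0) ⁻¹' DJ m n t

lemma measurableSet_E1 (m n : ℕ) (t : ℝ) : MeasurableSet (E1 m n t) :=
  (MeasurableEquiv.piFinSuccAbove (fun _ : Fin (m + n + 1) => ℝ) 0).measurable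
    (measurableSet_DJ m n t)

lemma joint (m n : ℕ) {t : ℝ} (ht : t ∈ Icc (0:ℝ) 1) :
    Measure.pi (fun _ : Fin (m + n + 1) => μ0) (E1 m n t)
      = ENNReal.ofReal (t ^ (m + n + 1) /
          ((m.factorial : ℝ) * n.factorial * (m + n + 1))) := by
  have mp := measurePreserving_piFinSuccAbove (fun _ : Fin (m + n + 1) => μ0) 0
  rw [E1, mp.measure_preimage_equiv, Measure.prod_apply (measurableSet_DJ m n t)]
  have hsec : ∀ a : ℝ, (Measure.pi fun _ : Fin (m + n) => μ0) (Prod.mk a ⁻¹' DJ m n t)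
      = (Iio t).indicator (fun a => (Measure.pi fun _ : Fin (m + n) => μ0) (Sset m n a)) a := by
    intro a
    by_cases ha : a < t
    · rw [indicator_of_mem (mem_Iio.mpr ha)]
      congr 1
      ext y
      simp [DJ, ha]
    · rw [indicator_of_notMem (by simpa using ha)]
      have : Prod.mk a ⁻¹' DJ m n t = ∅ := by
        ext y; simp [DJ, ha]
      rw [this, measure_empty]
  simp_rw [hsec]
  have hae : (fun a => (Iio t).indicator
        (fun a => (Measure.pi fun _ : Fin (m + n) => μ0) (Sset m n a)) a)
      =ᵐ[μ0] fun a => (Iio t).indicator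
        (fun a => ENNReal.ofReal (a ^ (m + n) / ((m.factorial : ℝ) * n.factorial))) a := by
    have hmem : ∀ᵐ a ∂μ0, a ∈ Icc (0:ℝ) 1 := ae_restrict_mem measurableSet_Icc
    filter_upwards [hmem] with a ha
    by_cases h' : a ∈ Iio t
    · rw [indicator_of_mem h', indicator_of_mem h', Sset_val, chain_meas m ha, chain_meas n ha,
        ← ENNReal.ofReal_mul (div_nonneg (pow_nonneg ha.1 m) (Nat.cast_nonneg _))]
      congr 1
      rw [div_mul_div_comm, ← pow_add]
    · rw [indicator_of_notMem h', indicator_of_notMem h']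
  rw [lintegral_congr_ae hae, key_integral (m + n) _
    (mul_pos (by exact_mod_cast m.factorial_pos) (by exact_mod_cast n.factorial_pos)) ht]
  congr 1
  push_cast
  ring

def gmap (m n : ℕ) (j : Fin (m + n + 1)) : ℤ :=
  if (j : ℕ) = 0 then 0 else if (j : ℕ) ≤ m then -((j : ℕ) : ℤ) else ((j : ℕ) : ℤ) - (m : ℤ)

lemma gmap_mk (m n v : ℕ) (h : v < m + n + 1) :
    gmap m n ⟨v, h⟩ = if v = 0 then 0 else if v ≤ m then -(v : ℤ) else (v : ℤ) - (m : ℤ) := rfl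

lemma gmap_zero (m n : ℕ) : gmap m n 0 = 0 := by
  simp [gmap]

lemma gmap_inj (m n : ℕ) : Function.Injective (gmap m n) := by
  intro a b h
  apply Fin.ext
  simp only [gmap] at h
  split_ifs at h <;> omega

lemma gmap_left (m n i : ℕ) (h : i < m) (h2 : i + 1 < m + n + 1) :
    gmap m n ⟨i + 1, h2⟩ = -(i : ℤ) - 1 := by
  rw [gmap_mk, if_neg (by omega), if_pos (by omega)]
  push_cast
  ring

lemma gmap_right (m n i : ℕ) (h : i < n) (h2 : m + i + 1 < m + n + 1) :
    gmap m n ⟨m + i + 1, h2⟩ = (i : ℤ) + 1 := by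
  rw [gmap_mk, if_neg (by omega), if_neg (by omega)]
  push_cast
  ring

lemma map_phi (P : Measure (ℤ → ℝ)) (hP : IsUniformProduct P) (m n : ℕ) :
    P.map (fun (T : ℤ → ℝ) (j : Fin (m + n + 1)) => T (gmap m n j))
      = Measure.pi (fun _ : Fin (m + n + 1) => μ0) := by
  refine (Measure.pi_eq fun A hA => ?_).symm
  have hφ : Measurable (fun (T : ℤ → ℝ) (j : Fin (m + n + 1)) => T (gmap m n j)) :=
    measurable_pi_lambda _ fun j => measurable_pi_apply _
  rw [Measure.map_apply hφ (MeasurableSet.univ_pi hA)]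
  classical
  set A' : ℤ → Set ℝ := fun i => ⋂ (j : Fin (m + n + 1)), ⋂ (_ : gmap m n j = i), A j with hA'
  have hA'm : ∀ i ∈ Finset.image (gmap m n) Finset.univ, MeasurableSet (A' i) :=
    fun i _ => MeasurableSet.iInter fun j => MeasurableSet.iInter fun _ => hA j
  have hset : (fun (T : ℤ → ℝ) (j : Fin (m + n + 1)) => T (gmap m n j)) ⁻¹' (univ.pi A)
      = {T : ℤ → ℝ | ∀ i ∈ Finset.image (gmap m n) Finset.univ, T i ∈ A' i} := by
    ext T
    constructor
    · intro h i hi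
      refine mem_iInter.2 fun j => mem_iInter.2 fun hj => ?_
      subst hj
      exact Set.mem_univ_pi.mp (mem_preimage.mp h) j
    · intro h
      refine mem_preimage.mpr (Set.mem_univ_pi.mpr fun j => ?_)
      have hmem := h (gmap m n j) (Finset.mem_image.mpr ⟨j, Finset.mem_univ j, rfl⟩)
      exact mem_iInter.1 (mem_iInter.1 hmem j) rfl
  rw [hset, hP _ _ hA'm, Finset.prod_image (fun a _ b _ h => gmap_inj m n h)]
  refine Finset.prod_congr rfl fun j _ => ?_
  show μ0 (A' (gmap m n j)) = μ0 (A j)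
  congr 1
  apply Subset.antisymm
  · intro x hx
    exact mem_iInter.1 (mem_iInter.1 hx j) rfl
  · intro x hx
    refine mem_iInter.2 fun j' => mem_iInter.2 fun hj' => ?_
    cases gmap_inj m n hj'
    exact hx

theorem prob_H_inter' (P : Measure (ℤ → ℝ)) (hP : IsUniformProduct P)
    (t : ℝ) (ht : t ∈ Icc (0 : ℝ) 1) (m n : ℕ)
    (HnegS : Set (ℤ → ℝ))
    (hHneg : HnegS = {T | T 0 < t ∧ ∀ i : ℕ, i < m → T (-(i : ℤ) - 1) < T (-(i : ℤ))})
    (HposS : Set (ℤ → ℝ))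
    (hHpos : HposS = {T | T 0 < t ∧ ∀ i : ℕ, i < n → T ((i : ℤ) + 1) < T (i : ℤ)}) :
    (P (HnegS ∩ HposS)).toReal =
      t ^ (m + n + 1) /
        ((Nat.factorial m : ℝ) * (Nat.factorial n) * (m + n + 1)) := by
  subst hHneg hHpos
  have hφ : Measurable (fun (T : ℤ → ℝ) (j : Fin (m + n + 1)) => T (gmap m n j)) :=
    measurable_pi_lambda _ fun j => measurable_pi_apply _
  have hpre : {T : ℤ → ℝ | T 0 < t ∧ ∀ i : ℕ, i < m → T (-(i : ℤ) - 1) < T (-(i : ℤ))} ∩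
        {T : ℤ → ℝ | T 0 < t ∧ ∀ i : ℕ, i < n → T ((i : ℤ) + 1) < T (i : ℤ)}
      = (fun (T : ℤ → ℝ) (j : Fin (m + n + 1)) => T (gmap m n j)) ⁻¹' E1 m n t := by
    ext T
    simp only [mem_inter_iff, mem_setOf_eq, mem_preimage, E1, DJ, Sset, happ, Fin.succ_mk,
      mem_setOf_eq]
    constructor
    · rintro ⟨⟨h0, hL⟩, -, hR⟩
      refine ⟨?_, ⟨fun i h => ?_, fun h => ?_⟩, fun i h => ?_, fun h => ?_⟩
      · rw [gmap_zero]
        exact h0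
      · rw [gmap_left m n (i + 1) (by omega) (by omega), gmap_left m n i (by omega) (by omega)]
        have hh := hL (i + 1) (by omega)
        convert hh using 2 <;> omega
      · rw [gmap_left m n 0 (by omega) (by omega), gmap_zero]
        have hh := hL 0 (by omega)
        convert hh using 2 <;> omega
      · rw [gmap_right m n (i + 1) (by omega) (by omega), gmap_right m n i (by omega) (by omega)]
        have hh := hR (i + 1) (by omega)
        convert hh using 2 <;> omega
      · rw [gmap_right m n 0 (by omega) (by omega), gmap_zero]
        have hh := hR 0 (by omega)
        convert hh using 2 <;> omega
    · rintro ⟨h0, ⟨hL1, hL2⟩, hR1, hR2⟩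
      rw [gmap_zero] at h0
      refine ⟨⟨h0, fun i hi => ?_⟩, h0, fun i hi => ?_⟩
      · rcases Nat.eq_zero_or_pos i with rfl | hpos
        · have hh := hL2 (by omega)
          rw [gmap_left m n 0 (by omega) (by omega), gmap_zero] at hh
          convert hh using 2 <;> omega
        · obtain ⟨i', rfl⟩ : ∃ i', i = i' + 1 := ⟨i - 1, by omega⟩
          have hh := hL1 i' (by omega)
          rw [gmap_left m n (i' + 1) (by omega) (by omega),
            gmap_left m n i' (by omega) (by omega)] at hh
          convert hh using 2 <;> omega
      · rcases Nat.eq_zero_or_pos i with rfl | hpos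
        · have hh := hR2 (by omega)
          rw [gmap_right m n 0 (by omega) (by omega), gmap_zero] at hh
          convert hh using 2 <;> omega
        · obtain ⟨i', rfl⟩ : ∃ i', i = i' + 1 := ⟨i - 1, by omega⟩
          have hh := hR1 i' (by omega)
          rw [gmap_right m n (i' + 1) (by omega) (by omega),
            gmap_right m n i' (by omega) (by omega)] at hh
          convert hh using 2 <;> omega
  rw [hpre, ← Measure.map_apply hφ (measurableSet_E1 m n t), map_phi P hP m n, joint m n ht,
    ENNReal.toReal_ofReal (div_nonneg (pow_nonneg ht.1 _) (by positivity))]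

theorem prob_H_inter (P : Measure (ℤ → ℝ)) (hP : IsUniformProduct P)
    (t : ℝ) (ht : t ∈ Icc (0 : ℝ) 1) (m n : ℕ) :
    (P (Hneg t m ∩ Hpos t n)).toReal =
      t ^ (m + n + 1) /
        ((Nat.factorial m : ℝ) * (Nat.factorial n) * (m + n + 1)) :=
  prob_H_inter' P hP t ht m n (Hneg t m) rfl (Hpos t n) rfl

end ProverAux
end

section
/- For every t ∈ [0,1] and all integers j, k ≥ 0, ℙ(G_{jk}^0(t)) = t^{2k+2j+1}/((2k)!(2j)!(2k+2j+1)) − t^{2k+2j+2}/((2k+1)!(2j)!(2k+2j+2)) − t^{2k+2j+2}/((2j+1)!(2k)!(2k+2j+2)) + t^{2k+2j+3}/((2k+1)!(2j+1)!(2k+2j+3)). -/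
open MeasureTheory Set

open scoped ENNReal

noncomputable section
namespace ProbG



/-- The uniform measure on `[0,1]`. -/
def unif : Measure ℝ := volume.restrict (Icc (0 : ℝ) 1)

instance : IsProbabilityMeasure unif :=
  ⟨by simp [unif, Real.volume_Icc]⟩

/-- `vchain c x i` is `c` for `i = 0` and `x (i-1)` for `1 ≤ i ≤ m`. -/
def vchain {m : ℕ} (c : ℝ) (x : Fin m → ℝ) : ℕ → ℝ
  | 0 => c
  | (i + 1) => if h : i < m then x ⟨i, h⟩ else 0

@[simp] lemma vchain_zero {m : ℕ} (c : ℝ) (x : Fin m → ℝ) : vchain c x 0 = c := rfl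

lemma vchain_succ {m : ℕ} (c : ℝ) (x : Fin m → ℝ) (i : ℕ) (h : i < m) :
    vchain c x (i + 1) = x ⟨i, h⟩ := by simp [vchain, h]

/-- Strictly decreasing chain below `c`. -/
def chainSet (n : ℕ) (c : ℝ) : Set (Fin n → ℝ) :=
  {x | ∀ i < n, vchain c x (i + 1) < vchain c x i}

/-- Strictly decreasing chain of length `n` below `c`, followed by one up-step. -/
def upChainSet (n : ℕ) (c : ℝ) : Set (Fin (n + 1) → ℝ) :=
  {x | (∀ i < n, vchain c x (i + 1) < vchain c x i) ∧ vchain c x n < vchain c x (n + 1)}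

lemma measurable_vchain_comp {α : Type*} [MeasurableSpace α] {m : ℕ}
    {c : α → ℝ} {y : α → Fin m → ℝ} (hc : Measurable c)
    (hy : ∀ i, Measurable fun a => y a i) (i : ℕ) :
    Measurable fun a => vchain (c a) (y a) i := by
  cases i with
  | zero => exact hc
  | succ i =>
      by_cases h : i < m
      · simpa [vchain, h] using hy ⟨i, h⟩
      · simpa [vchain, h] using measurable_const

lemma measurableSet_chain_comp {α : Type*} [MeasurableSpace α] {n : ℕ}
    {c : α → ℝ} {y : α → Fin n → ℝ} (hc : Measurable c)
    (hy : ∀ i, Measurable fun a => y a i) :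
    MeasurableSet {a | y a ∈ chainSet n (c a)} := by
  have : {a | y a ∈ chainSet n (c a)}
      = ⋂ i, ⋂ (_ : i < n), {a | vchain (c a) (y a) (i + 1) < vchain (c a) (y a) i} := by
    ext a; simp [chainSet]
  rw [this]
  exact MeasurableSet.iInter fun i => MeasurableSet.iInter fun _ =>
    measurableSet_lt (measurable_vchain_comp hc hy _) (measurable_vchain_comp hc hy _)

lemma measurableSet_upChain_comp {α : Type*} [MeasurableSpace α] {n : ℕ}
    {c : α → ℝ} {y : α → Fin (n + 1) → ℝ} (hc : Measurable c)
    (hy : ∀ i, Measurable fun a => y a i) :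
    MeasurableSet {a | y a ∈ upChainSet n (c a)} := by
  have : {a | y a ∈ upChainSet n (c a)}
      = (⋂ i, ⋂ (_ : i < n), {a | vchain (c a) (y a) (i + 1) < vchain (c a) (y a) i})
        ∩ {a | vchain (c a) (y a) n < vchain (c a) (y a) (n + 1)} := by
    ext a; simp [upChainSet]
  rw [this]
  exact (MeasurableSet.iInter fun i => MeasurableSet.iInter fun _ =>
      measurableSet_lt (measurable_vchain_comp hc hy _) (measurable_vchain_comp hc hy _)).inter
    (measurableSet_lt (measurable_vchain_comp hc hy _) (measurable_vchain_comp hc hy _))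

lemma measurableSet_chainSet (n : ℕ) (c : ℝ) : MeasurableSet (chainSet n c) := by
  simpa using measurableSet_chain_comp (α := Fin n → ℝ) (c := fun _ => c) (y := id)
    measurable_const (fun i => measurable_pi_apply i)

lemma measurableSet_upChainSet (n : ℕ) (c : ℝ) : MeasurableSet (upChainSet n c) := by
  simpa using measurableSet_upChain_comp (α := Fin (n + 1) → ℝ) (c := fun _ => c) (y := id)
    measurable_const (fun i => measurable_pi_apply i)

lemma vchain_insertNth_zero {n : ℕ} (c u : ℝ) (y : Fin n → ℝ) (i : ℕ) :
    vchain c (Fin.insertNth (0 : Fin (n + 1)) u y) (i + 1) = vchain u y i := by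
  cases i with
  | zero =>
      rw [vchain_succ _ _ 0 (Nat.succ_pos n), vchain_zero]
      have h0 : (⟨0, Nat.succ_pos n⟩ : Fin (n + 1)) = 0 := rfl
      rw [h0, Fin.insertNth_apply_same]
  | succ i =>
      by_cases h : i < n
      · rw [vchain_succ _ _ (i + 1) (by omega), vchain_succ _ _ i h]
        have hidx : (⟨i + 1, by omega⟩ : Fin (n + 1)) = (0 : Fin (n + 1)).succAbove ⟨i, h⟩ := by
          simp [Fin.succAbove_zero]
        rw [hidx, Fin.insertNth_apply_succAbove]
      · simp [vchain, h, show ¬(i + 1 < n + 1) by omega]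

lemma insertNth_zero_mem_chain {n : ℕ} (c u : ℝ) (y : Fin n → ℝ) :
    Fin.insertNth (0 : Fin (n + 1)) u y ∈ chainSet (n + 1) c ↔ u < c ∧ y ∈ chainSet n u := by
  constructor
  · intro h
    refine ⟨?_, fun i hi => ?_⟩
    · have h0 := h 0 (by omega)
      rwa [vchain_insertNth_zero, vchain_zero, vchain_zero] at h0
    · have h1 := h (i + 1) (by omega)
      rwa [vchain_insertNth_zero, vchain_insertNth_zero] at h1
  · rintro ⟨h1, h2⟩ i hi
    cases i with
    | zero => rw [vchain_insertNth_zero, vchain_zero, vchain_zero]; exact h1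
    | succ i => rw [vchain_insertNth_zero, vchain_insertNth_zero]; exact h2 i (by omega)


lemma vchain_cons {n : ℕ} (c u : ℝ) (y : Fin n → ℝ) (i : ℕ) :
    vchain c (Fin.cons u y : Fin (n + 1) → ℝ) (i + 1) = vchain u y i := by
  cases i with
  | zero =>
      rw [vchain_succ _ _ 0 (Nat.succ_pos n), vchain_zero]
      have h0 : (⟨0, Nat.succ_pos n⟩ : Fin (n + 1)) = 0 := rfl
      rw [h0, Fin.cons_zero]
  | succ i =>
      by_cases h : i < n
      · rw [vchain_succ _ _ (i + 1) (by omega), vchain_succ _ _ i h]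
        exact Fin.cons_succ (α := fun _ => ℝ) u y ⟨i, h⟩
      · simp [vchain, h, show ¬(i + 1 < n + 1) by omega]

lemma cons_mem_chain {n : ℕ} (c u : ℝ) (y : Fin n → ℝ) :
    (Fin.cons u y : Fin (n + 1) → ℝ) ∈ chainSet (n + 1) c ↔ u < c ∧ y ∈ chainSet n u := by
  constructor
  · intro h
    refine ⟨?_, fun i hi => ?_⟩
    · have h0 := h 0 (by omega)
      rwa [vchain_cons, vchain_zero, vchain_zero] at h0
    · have h1 := h (i + 1) (by omega)
      rwa [vchain_cons, vchain_cons] at h1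
  · rintro ⟨h1, h2⟩ i hi
    cases i with
    | zero => rw [vchain_cons, vchain_zero, vchain_zero]; exact h1
    | succ i => rw [vchain_cons, vchain_cons]; exact h2 i (by omega)

lemma L1 (m : ℕ) : ∀ n : ℕ, ∀ c ∈ Icc (0 : ℝ) 1,
    (∫⁻ x, (chainSet n c).indicator (fun x => ENNReal.ofReal ((vchain c x n) ^ m)) x
        ∂(Measure.pi fun _ : Fin n => unif))
      = ENNReal.ofReal (c ^ (n + m) * m.factorial / (n + m).factorial) := by
  intro n
  induction n with
  | zero =>
      intro c hc
      have h1 : chainSet 0 c = univ := by ext x; simp [chainSet]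
      have h2 : ((0 + m).factorial : ℝ) ≠ 0 := by positivity
      simp [h1, lintegral_const]
      congr 1
      field_simp
  | succ n ih =>
      intro c hc
      have hmp := measurePreserving_piFinSuccAbove (fun _ : Fin (n + 1) => unif) 0
      set e := MeasurableEquiv.piFinSuccAbove (fun _ : Fin (n + 1) => ℝ) 0 with he
      set ν := Measure.pi fun _ : Fin n => unif with hν
      set f : (Fin (n + 1) → ℝ) → ℝ≥0∞ :=
        (chainSet (n + 1) c).indicator
          (fun x => ENNReal.ofReal ((vchain c x (n + 1)) ^ m)) with hf
      have hfmeas : Measurable f := by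
        apply Measurable.indicator _ (measurableSet_chainSet _ _)
        exact (ENNReal.measurable_ofReal.comp
          ((measurable_vchain_comp measurable_const (fun i => measurable_pi_apply i)
            (n + 1)).pow_const m))
      have key : (∫⁻ x, f x ∂(Measure.pi fun _ : Fin (n + 1) => unif))
          = ∫⁻ p, f (e.symm p) ∂(unif.prod ν) := by
        rw [← (MeasurePreserving.symm e hmp).map_eq, MeasurableEmbedding.lintegral_map
          e.symm.measurableEmbedding]
      have hae : ∀ᵐ u ∂unif, u ∈ Icc (0 : ℝ) 1 := ae_restrict_mem measurableSet_Icc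
      have hsymm : ∀ (u : ℝ) (y : Fin n → ℝ),
          e.symm (u, y) = Fin.cons u y := fun u y => by
        simp only [he, MeasurableEquiv.piFinSuccAbove, MeasurableEquiv.symm_mk,
          MeasurableEquiv.coe_mk, Equiv.symm_symm, Fin.insertNthEquiv_zero]
        rfl
      have inner : ∀ u ∈ Icc (0 : ℝ) 1,
          (∫⁻ y, f (e.symm (u, y)) ∂ν)
            = (Iio c).indicator
                (fun u => ENNReal.ofReal (u ^ (n + m) * m.factorial / (n + m).factorial)) u := by
        intro u hu
        by_cases hu' : u < c
        · have hfun : (fun y => f (e.symm (u, y)))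
              = (chainSet n u).indicator (fun y => ENNReal.ofReal ((vchain u y n) ^ m)) := by
            funext y
            by_cases hy : y ∈ chainSet n u
            · have hmem : (Fin.cons u y : Fin (n + 1) → ℝ) ∈ chainSet (n + 1) c :=
                (cons_mem_chain c u y).2 ⟨hu', hy⟩
              rw [hsymm, hf, indicator_of_mem hmem, indicator_of_mem hy, vchain_cons]
            · have hmem : (Fin.cons u y : Fin (n + 1) → ℝ) ∉ chainSet (n + 1) c :=
                fun h => hy ((cons_mem_chain c u y).1 h).2
              rw [hsymm, hf, indicator_of_notMem hmem, indicator_of_notMem hy]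
          rw [hfun, ih u hu, indicator_of_mem (mem_Iio.2 hu')]
        · have hfun : (fun y => f (e.symm (u, y))) = fun _ => (0 : ℝ≥0∞) := by
            funext y
            have hmem : (Fin.cons u y : Fin (n + 1) → ℝ) ∉ chainSet (n + 1) c :=
              fun h => hu' ((cons_mem_chain c u y).1 h).1
            rw [hsymm, hf, indicator_of_notMem hmem]
          rw [hfun, indicator_of_notMem (by simpa using hu')]
          simp
      rw [key, lintegral_prod (fun p => f (e.symm p))
        ((hfmeas.comp e.symm.measurable).aemeasurable)]
      rw [lintegral_congr_ae (by filter_upwards [hae] with u hu using inner u hu)]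
      rw [lintegral_indicator measurableSet_Iio]
      have hres : unif.restrict (Iio c) = volume.restrict (Ico 0 c) := by
        rw [unif, Measure.restrict_restrict measurableSet_Iio]
        congr 1
        ext x
        simp only [mem_inter_iff, mem_Iio, mem_Icc, mem_Ico]
        constructor
        · rintro ⟨h1, h2, h3⟩; exact ⟨h2, h1⟩
        · rintro ⟨h1, h2⟩; exact ⟨h2, h1, le_trans h2.le hc.2⟩
      rw [hres]
      have hint : IntegrableOn
          (fun u : ℝ => u ^ (n + m) * (m.factorial : ℝ) / (n + m).factorial)
          (Ico 0 c) volume :=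
        ((((continuous_pow (n + m)).mul continuous_const).div_const
          _).integrableOn_Icc).mono_set Ico_subset_Icc_self
      have hnn : 0 ≤ᵐ[volume.restrict (Ico 0 c)]
          fun u : ℝ => u ^ (n + m) * (m.factorial : ℝ) / (n + m).factorial := by
        filter_upwards [ae_restrict_mem measurableSet_Ico] with x hx
        exact div_nonneg (mul_nonneg (pow_nonneg hx.1 _) (Nat.cast_nonneg _)) (Nat.cast_nonneg _)
      rw [← ofReal_integral_eq_lintegral_ofReal hint hnn]
      congr 1
      rw [integral_Ico_eq_integral_Ioo, ← integral_Ioc_eq_integral_Ioo,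
        ← intervalIntegral.integral_of_le hc.1]
      have : ∀ u : ℝ, u ^ (n + m) * (m.factorial : ℝ) / (n + m).factorial
          = u ^ (n + m) * ((m.factorial : ℝ) / (n + m).factorial) := fun u => by ring
      simp_rw [this]
      rw [intervalIntegral.integral_mul_const, integral_pow]
      have hfac : ((n + 1 + m).factorial : ℝ) = ((n + m : ℕ) + 1) * (n + m).factorial := by
        rw [show n + 1 + m = (n + m) + 1 by omega, Nat.factorial_succ]
        push_cast
        ring
      rw [show n + 1 + m = n + m + 1 by omega] at hfac ⊢
      have h1 : ((n + m).factorial : ℝ) ≠ 0 := by positivity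
      have h2 : ((n + m : ℕ) : ℝ) + 1 ≠ 0 := by positivity
      rw [hfac, zero_pow (by omega)]
      field_simp
      simp

lemma vchain_snoc_le {n : ℕ} (c u : ℝ) (y : Fin n → ℝ) (i : ℕ) (hi : i ≤ n) :
    vchain c (Fin.snoc y u : Fin (n + 1) → ℝ) i = vchain c y i := by
  cases i with
  | zero => rfl
  | succ i =>
      have h : i < n := by omega
      rw [vchain_succ _ _ i (by omega), vchain_succ _ _ i h]
      exact Fin.snoc_castSucc (α := fun _ => ℝ) (p := y) (x := u) (i := ⟨i, h⟩)

lemma vchain_snoc_top {n : ℕ} (c u : ℝ) (y : Fin n → ℝ) :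
    vchain c (Fin.snoc y u : Fin (n + 1) → ℝ) (n + 1) = u := by
  rw [vchain_succ _ _ n (by omega)]
  exact Fin.snoc_last (α := fun _ => ℝ) (p := y) (x := u)

lemma snoc_mem_upChain {n : ℕ} (c u : ℝ) (y : Fin n → ℝ) :
    (Fin.snoc y u : Fin (n + 1) → ℝ) ∈ upChainSet n c
      ↔ y ∈ chainSet n c ∧ vchain c y n < u := by
  unfold upChainSet chainSet
  simp only [mem_setOf_eq]
  constructor
  · rintro ⟨h1, h2⟩
    refine ⟨fun i hi => ?_, ?_⟩
    · have := h1 i hi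
      rwa [vchain_snoc_le _ _ _ _ (by omega), vchain_snoc_le _ _ _ _ (by omega)] at this
    · rwa [vchain_snoc_le _ _ _ _ le_rfl, vchain_snoc_top] at h2
  · rintro ⟨h1, h2⟩
    refine ⟨fun i hi => ?_, ?_⟩
    · rw [vchain_snoc_le _ _ _ _ (by omega), vchain_snoc_le _ _ _ _ (by omega)]
      exact h1 i hi
    · rw [vchain_snoc_le _ _ _ _ le_rfl, vchain_snoc_top]
      exact h2

lemma ae_pi_mem_Icc (n : ℕ) :
    ∀ᵐ y ∂(Measure.pi fun _ : Fin n => unif), ∀ i, y i ∈ Icc (0 : ℝ) 1 := by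
  rw [ae_all_iff]
  intro i
  rw [ae_iff]
  have hset : {y : Fin n → ℝ | ¬ y i ∈ Icc (0 : ℝ) 1}
      = Function.eval i ⁻¹' (Icc (0 : ℝ) 1)ᶜ := rfl
  classical
  rw [hset, Set.eval_preimage, Measure.pi_pi]
  apply Finset.prod_eq_zero (Finset.mem_univ i)
  simp [unif, Measure.restrict_apply (MeasurableSet.compl measurableSet_Icc)]

lemma unif_Ioi {v : ℝ} (hv : v ∈ Icc (0 : ℝ) 1) :
    unif (Ioi v) = ENNReal.ofReal (1 - v) := by
  rw [unif, Measure.restrict_apply measurableSet_Ioi]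
  have : Ioi v ∩ Icc (0 : ℝ) 1 = Ioc v 1 := by
    ext x
    simp only [mem_inter_iff, mem_Ioi, mem_Icc, mem_Ioc]
    constructor
    · rintro ⟨h1, h2, h3⟩; exact ⟨h1, h3⟩
    · rintro ⟨h1, h2⟩; exact ⟨h1, le_trans hv.1 h1.le, h2⟩
  rw [this, Real.volume_Ioc]

lemma vchain_mem_Icc {n : ℕ} {c : ℝ} (hc : c ∈ Icc (0 : ℝ) 1) {y : Fin n → ℝ}
    (hy : ∀ i, y i ∈ Icc (0 : ℝ) 1) : vchain c y n ∈ Icc (0 : ℝ) 1 := by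
  cases n with
  | zero => exact hc
  | succ n => rw [vchain_succ _ _ n (by omega)]; exact hy _

lemma L2 (n : ℕ) (c : ℝ) (hc : c ∈ Icc (0 : ℝ) 1) :
    Measure.pi (fun _ : Fin (n + 1) => unif) (upChainSet n c)
      = ENNReal.ofReal (c ^ n / n.factorial - c ^ (n + 1) / (n + 1).factorial) := by
  have hmp := measurePreserving_piFinSuccAbove (fun _ : Fin (n + 1) => unif) (Fin.last n)
  set e := MeasurableEquiv.piFinSuccAbove (fun _ : Fin (n + 1) => ℝ) (Fin.last n) with he
  set ν := Measure.pi fun _ : Fin n => unif with hν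
  have hup : MeasurableSet (upChainSet n c) := measurableSet_upChainSet n c
  have hsymm : ∀ (u : ℝ) (y : Fin n → ℝ), e.symm (u, y) = Fin.snoc y u := by
    intro u y
    simp only [he, MeasurableEquiv.piFinSuccAbove, MeasurableEquiv.symm_mk,
      MeasurableEquiv.coe_mk, Equiv.symm_symm, Fin.insertNthEquiv_last]
    rfl
  set S : Set (ℝ × (Fin n → ℝ)) :=
    {p | p.2 ∈ chainSet n c ∧ vchain c p.2 n < p.1} with hS
  have hSmeas : MeasurableSet S := by
    have h1 : MeasurableSet {p : ℝ × (Fin n → ℝ) | p.2 ∈ chainSet n c} :=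
      measurableSet_chain_comp measurable_const
        (fun i => (measurable_pi_apply i).comp measurable_snd)
    have h2 : MeasurableSet {p : ℝ × (Fin n → ℝ) | vchain c p.2 n < p.1} :=
      measurableSet_lt (measurable_vchain_comp measurable_const
        (fun i => (measurable_pi_apply i).comp measurable_snd) n) measurable_fst
    exact h1.inter h2
  have hpre : e.symm ⁻¹' upChainSet n c = S := by
    ext ⟨u, y⟩
    rw [mem_preimage, hsymm]
    exact snoc_mem_upChain c u y
  have step1 : Measure.pi (fun _ : Fin (n + 1) => unif) (upChainSet n c)
      = (unif.prod ν) S := by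
    rw [← hpre, ← hmp.map_eq, Measure.map_apply e.measurable (e.symm.measurable hup)]
    congr 1
    ext x
    simp
  rw [step1, Measure.prod_apply_symm (hpre ▸ e.symm.measurable hup)]
  have hslice : ∀ y : Fin n → ℝ, (∀ i, y i ∈ Icc (0 : ℝ) 1) →
      unif ((fun u => (u, y)) ⁻¹' S)
        = (chainSet n c).indicator
            (fun y => ENNReal.ofReal ((vchain c y n) ^ 0)
              - ENNReal.ofReal ((vchain c y n) ^ 1)) y := by
    intro y hy
    by_cases hmem : y ∈ chainSet n c
    · have hsl : (fun u => (u, y)) ⁻¹' S = Ioi (vchain c y n) := by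
        ext u
        simp [hS, hmem, mem_Ioi]
      have hv := vchain_mem_Icc hc hy
      rw [hsl, unif_Ioi hv, indicator_of_mem hmem, pow_zero, pow_one]
      exact ENNReal.ofReal_sub 1 hv.1
    · have hsl : (fun u => (u, y)) ⁻¹' S = ∅ := by
        ext u
        simp [hS, hmem]
      rw [hsl, indicator_of_notMem hmem, measure_empty]
  rw [lintegral_congr_ae (by filter_upwards [ae_pi_mem_Icc n] with y hy using hslice y hy)]
  have hmeasv : Measurable fun y : Fin n → ℝ => vchain c y n :=
    measurable_vchain_comp measurable_const (fun i => measurable_pi_apply i) n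
  have hFmeas : ∀ m : ℕ, Measurable fun y : Fin n → ℝ =>
      (chainSet n c).indicator (fun y => ENNReal.ofReal ((vchain c y n) ^ m)) y := by
    intro m
    exact Measurable.indicator (ENNReal.measurable_ofReal.comp (hmeasv.pow_const m))
      (measurableSet_chainSet n c)
  have hsplit : (fun y : Fin n → ℝ => (chainSet n c).indicator
      (fun y => ENNReal.ofReal ((vchain c y n) ^ 0)
        - ENNReal.ofReal ((vchain c y n) ^ 1)) y)
      = fun y => (chainSet n c).indicator (fun y => ENNReal.ofReal ((vchain c y n) ^ 0)) y
        - (chainSet n c).indicator (fun y => ENNReal.ofReal ((vchain c y n) ^ 1)) y := by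
    funext y
    by_cases hmem : y ∈ chainSet n c <;>
      simp [indicator_of_mem, indicator_of_notMem, hmem]
  rw [hsplit]
  have hle : (fun y : Fin n → ℝ =>
        (chainSet n c).indicator (fun y => ENNReal.ofReal ((vchain c y n) ^ 1)) y)
      ≤ᵐ[ν] fun y =>
        (chainSet n c).indicator (fun y => ENNReal.ofReal ((vchain c y n) ^ 0)) y := by
    filter_upwards [ae_pi_mem_Icc n] with y hy
    by_cases hmem : y ∈ chainSet n c
    · rw [indicator_of_mem hmem, indicator_of_mem hmem, pow_one, pow_zero]
      exact ENNReal.ofReal_le_ofReal (vchain_mem_Icc hc hy).2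
    · rw [indicator_of_notMem hmem, indicator_of_notMem hmem]
  have hfin : (∫⁻ y, (chainSet n c).indicator
      (fun y => ENNReal.ofReal ((vchain c y n) ^ 1)) y ∂ν) ≠ ⊤ := by
    rw [L1 1 n c hc]
    exact ENNReal.ofReal_ne_top
  rw [lintegral_sub (hFmeas 1) hfin hle, L1 0 n c hc, L1 1 n c hc,
    ← ENNReal.ofReal_sub]
  · congr 1
    simp [Nat.factorial]
  · exact div_nonneg (mul_nonneg (pow_nonneg hc.1 _) (Nat.cast_nonneg _)) (Nat.cast_nonneg _)

def BSet (a b : ℕ) (t : ℝ) : Set ((Unit ⊕ (Fin (a + 1) ⊕ Fin (b + 1))) → ℝ) :=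
  {x | x (Sum.inl ()) < t
    ∧ (fun i => x (Sum.inr (Sum.inl i))) ∈ upChainSet a (x (Sum.inl ()))
    ∧ (fun i => x (Sum.inr (Sum.inr i))) ∈ upChainSet b (x (Sum.inl ()))}

lemma fchain_nonneg {n : ℕ} {u : ℝ} (hu : u ∈ Icc (0 : ℝ) 1) :
    0 ≤ u ^ n / n.factorial - u ^ (n + 1) / (n + 1).factorial := by
  have h1 : u ^ (n + 1) ≤ u ^ n := pow_le_pow_of_le_one hu.1 hu.2 (by omega)
  have hfac : (n.factorial : ℝ) ≤ ((n + 1).factorial : ℝ) := by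
    exact_mod_cast Nat.factorial_le (by omega)
  have hpos : (0 : ℝ) < n.factorial := by positivity
  have := div_le_div₀ (pow_nonneg hu.1 n) h1 hpos hfac
  linarith

lemma measurableSet_BSet (a b : ℕ) (t : ℝ) : MeasurableSet (BSet a b t) := by
  have h1 : MeasurableSet {x : (Unit ⊕ (Fin (a + 1) ⊕ Fin (b + 1))) → ℝ |
      x (Sum.inl ()) < t} :=
    measurableSet_lt (measurable_pi_apply _) measurable_const
  have h2 : MeasurableSet {x : (Unit ⊕ (Fin (a + 1) ⊕ Fin (b + 1))) → ℝ |
      (fun i => x (Sum.inr (Sum.inl i))) ∈ upChainSet a (x (Sum.inl ()))} :=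
    measurableSet_upChain_comp (measurable_pi_apply _) (fun i => measurable_pi_apply _)
  have h3 : MeasurableSet {x : (Unit ⊕ (Fin (a + 1) ⊕ Fin (b + 1))) → ℝ |
      (fun i => x (Sum.inr (Sum.inr i))) ∈ upChainSet b (x (Sum.inl ()))} :=
    measurableSet_upChain_comp (measurable_pi_apply _) (fun i => measurable_pi_apply _)
  exact (h1.inter (h2.inter h3))

lemma L3 (a b : ℕ) (t : ℝ) (ht : t ∈ Icc (0 : ℝ) 1) :
    Measure.pi (fun _ : Unit ⊕ (Fin (a + 1) ⊕ Fin (b + 1)) => unif) (BSet a b t)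
      = ENNReal.ofReal (∫ u in Ico (0 : ℝ) t,
          (u ^ a / a.factorial - u ^ (a + 1) / (a + 1).factorial)
            * (u ^ b / b.factorial - u ^ (b + 1) / (b + 1).factorial)) := by
  classical
  set β := Fin (a + 1) ⊕ Fin (b + 1) with hβ
  have hmp1 := measurePreserving_sumPiEquivProdPi
    (X := fun _ : Unit ⊕ β => ℝ) (fun _ => unif)
  have hmpU := measurePreserving_funUnique (unif) Unit
  have hmp2 := measurePreserving_sumPiEquivProdPi
    (X := fun _ : β => ℝ) (fun _ => unif)
  set piL := Measure.pi fun _ : Fin (a + 1) => unif with hpiL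
  set piR := Measure.pi fun _ : Fin (b + 1) => unif with hpiR
  have hmpF := (hmpU.prod hmp2).comp hmp1
  set F : ((Unit ⊕ β) → ℝ) → ℝ × ((Fin (a + 1) → ℝ) × (Fin (b + 1) → ℝ)) :=
    (Prod.map (MeasurableEquiv.funUnique Unit ℝ)
        (MeasurableEquiv.sumPiEquivProdPi (fun _ : β => ℝ)))
      ∘ (MeasurableEquiv.sumPiEquivProdPi (fun _ : Unit ⊕ β => ℝ)) with hF
  set S2 : Set (ℝ × ((Fin (a + 1) → ℝ) × (Fin (b + 1) → ℝ))) :=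
    {p | p.1 < t ∧ p.2.1 ∈ upChainSet a p.1 ∧ p.2.2 ∈ upChainSet b p.1} with hS2
  have hS2meas : MeasurableSet S2 := by
    have h1 : MeasurableSet {p : ℝ × ((Fin (a + 1) → ℝ) × (Fin (b + 1) → ℝ)) |
        p.1 < t} := measurableSet_lt measurable_fst measurable_const
    have h2 : MeasurableSet {p : ℝ × ((Fin (a + 1) → ℝ) × (Fin (b + 1) → ℝ)) |
        p.2.1 ∈ upChainSet a p.1} :=
      measurableSet_upChain_comp measurable_fst
        (fun i => (measurable_pi_apply i).comp (measurable_fst.comp measurable_snd))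
    have h3 : MeasurableSet {p : ℝ × ((Fin (a + 1) → ℝ) × (Fin (b + 1) → ℝ)) |
        p.2.2 ∈ upChainSet b p.1} :=
      measurableSet_upChain_comp measurable_fst
        (fun i => (measurable_pi_apply i).comp (measurable_snd.comp measurable_snd))
    exact h1.inter (h2.inter h3)
  have hpre : F ⁻¹' S2 = BSet a b t := rfl
  have step1 : Measure.pi (fun _ : Unit ⊕ β => unif) (BSet a b t)
      = (unif.prod (piL.prod piR)) S2 := by
    rw [← hpre]
    exact hmpF.measure_preimage hS2meas.nullMeasurableSet
  rw [step1, Measure.prod_apply hS2meas]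
  have hslice : ∀ u : ℝ, u ∈ Icc (0 : ℝ) 1 →
      (piL.prod piR) (Prod.mk u ⁻¹' S2)
        = (Iio t).indicator (fun u => ENNReal.ofReal
            ((u ^ a / a.factorial - u ^ (a + 1) / (a + 1).factorial)
              * (u ^ b / b.factorial - u ^ (b + 1) / (b + 1).factorial))) u := by
    intro u hu
    by_cases hut : u < t
    · have hsl : Prod.mk u ⁻¹' S2 = (upChainSet a u) ×ˢ (upChainSet b u) := by
        ext p
        simp [hS2, hut, mem_prod]
      rw [hsl, Measure.prod_prod, hpiL, hpiR, L2 a u hu, L2 b u hu,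
        indicator_of_mem (mem_Iio.2 hut),
        ← ENNReal.ofReal_mul (fchain_nonneg hu)]
    · have hsl : Prod.mk u ⁻¹' S2 = ∅ := by
        ext p
        simp [hS2, hut]
      rw [hsl, measure_empty, indicator_of_notMem (by simpa using hut)]
  rw [lintegral_congr_ae
    (by filter_upwards [ae_restrict_mem measurableSet_Icc] with u hu using hslice u hu)]
  rw [lintegral_indicator measurableSet_Iio]
  have hres : unif.restrict (Iio t) = volume.restrict (Ico 0 t) := by
    rw [unif, Measure.restrict_restrict measurableSet_Iio]
    congr 1
    ext x
    simp only [mem_inter_iff, mem_Iio, mem_Icc, mem_Ico]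
    constructor
    · rintro ⟨h1, h2, h3⟩; exact ⟨h2, h1⟩
    · rintro ⟨h1, h2⟩; exact ⟨h2, h1, le_trans h2.le ht.2⟩
  rw [hres]
  have hcont : Continuous fun u : ℝ =>
      (u ^ a / a.factorial - u ^ (a + 1) / (a + 1).factorial)
        * (u ^ b / b.factorial - u ^ (b + 1) / (b + 1).factorial) :=
    (((continuous_pow a).div_const _).sub ((continuous_pow (a + 1)).div_const _)).mul
      (((continuous_pow b).div_const _).sub ((continuous_pow (b + 1)).div_const _))
  have hint : IntegrableOn (fun u : ℝ =>
      (u ^ a / a.factorial - u ^ (a + 1) / (a + 1).factorial)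
        * (u ^ b / b.factorial - u ^ (b + 1) / (b + 1).factorial)) (Ico 0 t) volume :=
    hcont.integrableOn_Icc.mono_set Ico_subset_Icc_self
  have hnn : 0 ≤ᵐ[volume.restrict (Ico 0 t)] fun u : ℝ =>
      (u ^ a / a.factorial - u ^ (a + 1) / (a + 1).factorial)
        * (u ^ b / b.factorial - u ^ (b + 1) / (b + 1).factorial) := by
    filter_upwards [ae_restrict_mem measurableSet_Ico] with x hx
    have hx1 : x ∈ Icc (0 : ℝ) 1 := ⟨hx.1, le_trans hx.2.le ht.2⟩
    exact mul_nonneg (fchain_nonneg hx1) (fchain_nonneg hx1)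
  rw [← ofReal_integral_eq_lintegral_ofReal hint hnn]

lemma vchain_left (T : ℤ → ℝ) (n : ℕ) :
    ∀ m ≤ n + 1, vchain (T 0) (fun i : Fin (n + 1) => T (-(i : ℤ) - 1)) m
      = T (-(m : ℤ)) := by
  intro m hm
  cases m with
  | zero => simp
  | succ m =>
      rw [vchain_succ _ _ m (by omega)]
      congr 1
      push_cast
      ring

lemma vchain_right (T : ℤ → ℝ) (n : ℕ) :
    ∀ m ≤ n + 1, vchain (T 0) (fun i : Fin (n + 1) => T ((i : ℤ) + 1)) m
      = T ((m : ℤ)) := by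
  intro m hm
  cases m with
  | zero => simp
  | succ m =>
      rw [vchain_succ _ _ m (by omega)]
      congr 1

lemma left_mem (T : ℤ → ℝ) (n : ℕ) :
    ((fun i : Fin (n + 1) => T (-(i : ℤ) - 1)) ∈ upChainSet n (T 0))
      ↔ ((∀ i : ℕ, i < n → T (0 - i - 1) < T (0 - i)) ∧ T (0 - n) < T (0 - n - 1)) := by
  have hidx1 : ∀ i : ℕ, (0 : ℤ) - i - 1 = -((i + 1 : ℕ) : ℤ) := by
    intro i; push_cast; ring
  have hidx2 : ∀ i : ℕ, (0 : ℤ) - i = -(i : ℤ) := by intro i; ring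
  unfold upChainSet
  simp only [mem_setOf_eq]
  constructor
  · rintro ⟨h1, h2⟩
    refine ⟨fun i hi => ?_, ?_⟩
    · have h := h1 i hi
      rw [vchain_left T n (i + 1) (by omega), vchain_left T n i (by omega)] at h
      rw [hidx1 i, hidx2 i]
      exact h
    · rw [vchain_left T n n (by omega), vchain_left T n (n + 1) le_rfl] at h2
      convert h2 using 2 <;> omega
  · rintro ⟨h1, h2⟩
    refine ⟨fun i hi => ?_, ?_⟩
    · rw [vchain_left T n (i + 1) (by omega), vchain_left T n i (by omega)]
      have h := h1 i hi
      rwa [hidx1 i, hidx2 i] at h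
    · rw [vchain_left T n n (by omega), vchain_left T n (n + 1) le_rfl]
      convert h2 using 2 <;> omega

lemma right_mem (T : ℤ → ℝ) (n : ℕ) :
    ((fun i : Fin (n + 1) => T ((i : ℤ) + 1)) ∈ upChainSet n (T 0))
      ↔ ((∀ i : ℕ, i < n → T (0 + i + 1) < T (0 + i)) ∧ T (0 + n) < T (0 + n + 1)) := by
  have hidx1 : ∀ i : ℕ, (0 : ℤ) + i + 1 = ((i + 1 : ℕ) : ℤ) := by
    intro i; push_cast; ring
  have hidx2 : ∀ i : ℕ, (0 : ℤ) + i = (i : ℤ) := by intro i; ring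
  unfold upChainSet
  simp only [mem_setOf_eq]
  constructor
  · rintro ⟨h1, h2⟩
    refine ⟨fun i hi => ?_, ?_⟩
    · have h := h1 i hi
      rw [vchain_right T n (i + 1) (by omega), vchain_right T n i (by omega)] at h
      rw [hidx1 i, hidx2 i]
      exact h
    · rw [vchain_right T n n (by omega), vchain_right T n (n + 1) le_rfl] at h2
      convert h2 using 2 <;> omega
  · rintro ⟨h1, h2⟩
    refine ⟨fun i hi => ?_, ?_⟩
    · rw [vchain_right T n (i + 1) (by omega), vchain_right T n i (by omega)]
      have h := h1 i hi
      rwa [hidx1 i, hidx2 i] at h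
    · rw [vchain_right T n n (by omega), vchain_right T n (n + 1) le_rfl]
      convert h2 using 2 <;> omega

def emb (a b : ℕ) : (Unit ⊕ (Fin (a + 1) ⊕ Fin (b + 1))) → ℤ
  | Sum.inl _ => 0
  | Sum.inr (Sum.inl i) => -(i : ℤ) - 1
  | Sum.inr (Sum.inr i) => (i : ℤ) + 1

lemma emb_injective (a b : ℕ) : Function.Injective (emb a b) := by
  rintro (u | i | i) (v | i' | i') h <;> simp only [emb] at h
  · cases u; cases v; rfl
  · omega
  · omega
  · omega
  · have : (i : ℕ) = (i' : ℕ) := by omega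
    exact congrArg _ (congrArg _ (Fin.ext this))
  · omega
  · omega
  · omega
  · have : (i : ℕ) = (i' : ℕ) := by omega
    exact congrArg _ (congrArg _ (Fin.ext this))

def IsUniformProduct' (P : Measure (ℤ → ℝ)) : Prop :=
  ∀ (F : Finset ℤ) (A : ℤ → Set ℝ), (∀ i ∈ F, MeasurableSet (A i)) →
    P {T | ∀ i ∈ F, T i ∈ A i} = ∏ i ∈ F, (volume.restrict (Icc (0 : ℝ) 1)) (A i)

lemma map_pi {ι : Type} [Fintype ι] (P : Measure (ℤ → ℝ)) (hP : IsUniformProduct' P)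
    (e : ι → ℤ) (he : Function.Injective e) :
    P.map (fun T i => T (e i)) = Measure.pi (fun _ : ι => unif) := by
  classical
  have hmeas : Measurable fun (T : ℤ → ℝ) (i : ι) => T (e i) :=
    measurable_pi_lambda _ fun i => measurable_pi_apply (e i)
  symm
  apply Measure.pi_eq
  intro A hA
  rw [Measure.map_apply hmeas (MeasurableSet.univ_pi hA)]
  set A' : ℤ → Set ℝ := fun z => if h : ∃ i, e i = z then A h.choose else univ with hA'
  have hA'e : ∀ i, A' (e i) = A i := by
    intro i
    have h : ∃ i', e i' = e i := ⟨i, rfl⟩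
    simp only [hA', dif_pos h]
    rw [he h.choose_spec]
  have hpre : (fun T i => T (e i)) ⁻¹' (univ.pi A)
      = {T : ℤ → ℝ | ∀ z ∈ Finset.image e Finset.univ, T z ∈ A' z} := by
    ext T
    simp only [mem_preimage, mem_univ_pi, Finset.mem_image, mem_setOf_eq]
    constructor
    · rintro h z ⟨i, _, rfl⟩
      rw [hA'e]
      exact h i
    · intro h i
      rw [← hA'e i]
      exact h (e i) ⟨i, Finset.mem_univ i, rfl⟩
  have hA'meas : ∀ z ∈ Finset.image e Finset.univ, MeasurableSet (A' z) := by
    intro z hz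
    rcases Finset.mem_image.1 hz with ⟨i, _, rfl⟩
    rw [hA'e]
    exact hA i
  rw [hpre, hP (Finset.image e Finset.univ) A' hA'meas,
    Finset.prod_image (fun x _ y _ h => he h)]
  exact Finset.prod_congr rfl fun i _ => by rw [hA'e]; rfl

lemma integral_eval (a b : ℕ) (t : ℝ) (ht : t ∈ Icc (0 : ℝ) 1) :
    (∫ u in Ico (0 : ℝ) t,
        (u ^ a / a.factorial - u ^ (a + 1) / (a + 1).factorial)
          * (u ^ b / b.factorial - u ^ (b + 1) / (b + 1).factorial))
      = t ^ (a + b + 1) / ((a.factorial : ℝ) * b.factorial * (a + b + 1))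
        - t ^ (a + b + 2) / (((a + 1).factorial : ℝ) * b.factorial * (a + b + 2))
        - t ^ (a + b + 2) / (((b + 1).factorial : ℝ) * a.factorial * (a + b + 2))
        + t ^ (a + b + 3) / (((a + 1).factorial : ℝ) * (b + 1).factorial * (a + b + 3)) := by
  rw [integral_Ico_eq_integral_Ioo, ← integral_Ioc_eq_integral_Ioo,
    ← intervalIntegral.integral_of_le ht.1]
  have hexp : ∀ u : ℝ,
      (u ^ a / a.factorial - u ^ (a + 1) / (a + 1).factorial)
          * (u ^ b / b.factorial - u ^ (b + 1) / (b + 1).factorial)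
        = (1 / ((a.factorial : ℝ) * b.factorial)) * u ^ (a + b)
          - (1 / (((a + 1).factorial : ℝ) * b.factorial)) * u ^ (a + b + 1)
          - (1 / (((b + 1).factorial : ℝ) * a.factorial)) * u ^ (a + b + 1)
          + (1 / (((a + 1).factorial : ℝ) * (b + 1).factorial)) * u ^ (a + b + 2) := by
    intro u
    field_simp
    ring
  simp_rw [hexp]
  have hii : ∀ (c : ℝ) (n : ℕ), IntervalIntegrable (fun u : ℝ => c * u ^ n) volume 0 t :=
    fun c n => (continuous_const.mul (continuous_pow n)).intervalIntegrable 0 t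
  rw [intervalIntegral.integral_add (((hii _ _).sub (hii _ _)).sub (hii _ _)) (hii _ _),
    intervalIntegral.integral_sub ((hii _ _).sub (hii _ _)) (hii _ _),
    intervalIntegral.integral_sub (hii _ _) (hii _ _),
    intervalIntegral.integral_const_mul, intervalIntegral.integral_const_mul,
    intervalIntegral.integral_const_mul, intervalIntegral.integral_const_mul,
    integral_pow, integral_pow, integral_pow]
  have h1 : ((a.factorial : ℝ)) ≠ 0 := by positivity
  have h2 : ((b.factorial : ℝ)) ≠ 0 := by positivity
  have h3 : (((a + 1).factorial : ℝ)) ≠ 0 := by positivity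
  have h4 : (((b + 1).factorial : ℝ)) ≠ 0 := by positivity
  have h5 : ((a : ℝ) + b + 1) ≠ 0 := by positivity
  have h6 : ((a : ℝ) + b + 2) ≠ 0 := by positivity
  have h7 : ((a : ℝ) + b + 3) ≠ 0 := by positivity
  rw [zero_pow (by omega : a + b + 1 ≠ 0), zero_pow (by omega : a + b + 1 + 1 ≠ 0),
    zero_pow (by omega : a + b + 2 + 1 ≠ 0)]
  push_cast
  rw [show a + b + 1 + 1 = a + b + 2 by omega, show a + b + 2 + 1 = a + b + 3 by omega]
  field_simp
  ring

end ProbG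
end

open ProbG

theorem prob_G (P : Measure (ℤ → ℝ)) (hP : IsUniformProduct P)
    (t : ℝ) (ht : t ∈ Icc (0 : ℝ) 1) (j k : ℕ) :
    (P (G t 0 j k)).toReal =
      t ^ (2 * k + 2 * j + 1) /
          ((Nat.factorial (2 * k) : ℝ) * (Nat.factorial (2 * j)) * (2 * k + 2 * j + 1))
        - t ^ (2 * k + 2 * j + 2) /
          ((Nat.factorial (2 * k + 1) : ℝ) * (Nat.factorial (2 * j)) * (2 * k + 2 * j + 2))
        - t ^ (2 * k + 2 * j + 2) /
          ((Nat.factorial (2 * j + 1) : ℝ) * (Nat.factorial (2 * k)) * (2 * k + 2 * j + 2))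
        + t ^ (2 * k + 2 * j + 3) /
          ((Nat.factorial (2 * k + 1) : ℝ) * (Nat.factorial (2 * j + 1)) * (2 * k + 2 * j + 3)) := by
  classical
  have hP' : ProbG.IsUniformProduct' P := hP
  have hmeas : Measurable fun (T : ℤ → ℝ)
      (i : Unit ⊕ (Fin (2 * j + 1) ⊕ Fin (2 * k + 1))) => T (emb (2 * j) (2 * k) i) :=
    measurable_pi_lambda _ fun i => measurable_pi_apply _
  have hGeq : G t 0 j k
      = (fun T i => T (emb (2 * j) (2 * k) i)) ⁻¹' BSet (2 * j) (2 * k) t := by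
    ext T
    simp only [G, BSet, emb, mem_setOf_eq, mem_preimage]
    rw [left_mem T (2 * j), right_mem T (2 * k)]
    constructor
    · rintro ⟨h1, h2, h3, h4, h5⟩
      refine ⟨h1, ⟨h2, ?_⟩, ⟨h4, ?_⟩⟩
      · convert h3 using 2 <;> omega
      · convert h5 using 2 <;> omega
    · rintro ⟨h1, ⟨h2, h3⟩, ⟨h4, h5⟩⟩
      refine ⟨h1, h2, ?_, h4, ?_⟩
      · convert h3 using 2 <;> omega
      · convert h5 using 2 <;> omega
  have hnn : 0 ≤ ∫ u in Ico (0 : ℝ) t,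
      (u ^ (2 * j) / (2 * j).factorial - u ^ (2 * j + 1) / (2 * j + 1).factorial)
        * (u ^ (2 * k) / (2 * k).factorial - u ^ (2 * k + 1) / (2 * k + 1).factorial) := by
    apply setIntegral_nonneg measurableSet_Ico
    intro x hx
    have hx1 : x ∈ Icc (0 : ℝ) 1 := ⟨hx.1, le_trans hx.2.le ht.2⟩
    exact mul_nonneg (fchain_nonneg hx1) (fchain_nonneg hx1)
  rw [hGeq, ← Measure.map_apply hmeas (measurableSet_BSet _ _ _),
    map_pi P hP' _ (emb_injective _ _), L3 _ _ t ht,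
    ENNReal.toReal_ofReal hnn, integral_eval (2 * j) (2 * k) t ht]
  push_cast
  ring
end

section
/- For every t ∈ [0,1] and every integer k ≥ 0, the series ∑_{j=0}^{∞} ℙ(G_{jk}^0(t)) converges and equals e^{−t} · t^{2k+1}/(2k+1)!. -/
open MeasureTheory Set

noncomputable def um : Measure ℝ := volume.restrict (Icc (0:ℝ) 1)

instance : IsProbabilityMeasure um := ⟨by simp [um, Real.volume_Icc]⟩

instance : NullSingletonClass um := by unfold um; infer_instance

noncomputable def pim (m : ℕ) : Measure (Fin m → ℝ) := Measure.pi (fun _ => um)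

instance (m : ℕ) : IsProbabilityMeasure (pim m) := by unfold pim; infer_instance

/-- `Fin.cons` specialized to constant type family `ℝ`. -/
def fcons {m : ℕ} (x : ℝ) (u : Fin m → ℝ) : Fin (m+1) → ℝ := Fin.cons (α := fun _ => ℝ) x u

@[simp] lemma fcons_zero {m : ℕ} (x : ℝ) (u : Fin m → ℝ) : fcons x u 0 = x := rfl

@[simp] lemma fcons_succ {m : ℕ} (x : ℝ) (u : Fin m → ℝ) (q : Fin m) :
    fcons x u q.succ = u q := by
  simp [fcons]

def Ch (m : ℕ) (x : ℝ) : Set (Fin m → ℝ) := {u | ∀ i : Fin m, u i < fcons x u i.castSucc}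

def Wg (m : ℕ) (x : ℝ) : Set (Fin (m+1) → ℝ) :=
  {u | (fun i : Fin m => u i.castSucc) ∈ Ch m x ∧
    fcons x (fun i : Fin m => u i.castSucc) (Fin.last m) < u (Fin.last m)}

lemma measurable_cons_apply {α : Type*} [MeasurableSpace α] {m : ℕ} (p : Fin (m+1))
    {f : α → ℝ} {g : α → Fin m → ℝ} (hf : Measurable f) (hg : Measurable g) :
    Measurable (fun a => fcons (f a) (g a) p) := by
  induction p using Fin.cases with
  | zero => simpa using hf
  | succ q => simp only [fcons_succ]; exact (measurable_pi_apply q).comp hg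

lemma measurableSet_mem_Ch {α : Type*} [MeasurableSpace α] {m : ℕ} {f : α → ℝ}
    {g : α → Fin m → ℝ} (hf : Measurable f) (hg : Measurable g) :
    MeasurableSet {a | g a ∈ Ch m (f a)} := by
  have : {a | g a ∈ Ch m (f a)}
      = ⋂ i : Fin m, {a | g a i < fcons (f a) (g a) i.castSucc} := by
    ext a; simp [Ch, Set.mem_iInter]
  rw [this]
  exact MeasurableSet.iInter fun i =>
    measurableSet_lt ((measurable_pi_apply i).comp hg) (measurable_cons_apply i.castSucc hf hg)

lemma measurableSet_mem_Wg {α : Type*} [MeasurableSpace α] {m : ℕ} {f : α → ℝ}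
    {g : α → Fin (m+1) → ℝ} (hf : Measurable f) (hg : Measurable g) :
    MeasurableSet {a | g a ∈ Wg m (f a)} := by
  have hg' : Measurable (fun a => (fun i : Fin m => g a i.castSucc)) :=
    measurable_pi_lambda _ fun i => (measurable_pi_apply i.castSucc).comp hg
  have : {a | g a ∈ Wg m (f a)} = {a | (fun i : Fin m => g a i.castSucc) ∈ Ch m (f a)} ∩
      {a | fcons (f a) (fun i : Fin m => g a i.castSucc) (Fin.last m) < g a (Fin.last m)} := by
    ext a; simp [Wg]
  rw [this]
  exact (measurableSet_mem_Ch hf hg').inter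
    (measurableSet_lt (measurable_cons_apply (Fin.last m) hf hg')
      ((measurable_pi_apply (Fin.last m)).comp hg))

lemma measurableSet_Ch {m : ℕ} {x : ℝ} : MeasurableSet (Ch m x) := by
  have := measurableSet_mem_Ch (α := Fin m → ℝ) (f := fun _ => x) (g := id)
    measurable_const measurable_id
  simpa using this

lemma measurableSet_Wg {m : ℕ} {x : ℝ} : MeasurableSet (Wg m x) := by
  have := measurableSet_mem_Wg (α := Fin (m+1) → ℝ) (f := fun _ => x) (g := id)
    measurable_const measurable_id
  simpa using this

lemma cons_castSucc {m : ℕ} (x : ℝ) (u : Fin (m+1) → ℝ) (p : Fin (m+1)) :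
    fcons x u p.castSucc = fcons x (fun i : Fin m => u i.castSucc) p := by
  induction p using Fin.cases with
  | zero => simp [show (0:Fin (m+1)).castSucc = 0 from rfl]
  | succ q => rw [← Fin.succ_castSucc]; simp

lemma cons_eq_word {m : ℕ} {x : ℝ} {v : Fin m → ℝ} {w : ℕ → ℝ} (h0 : w 0 = x)
    (hv : ∀ i : Fin m, v i = w (i+1)) : ∀ p : Fin (m+1), fcons x v p = w p := by
  intro p
  induction p using Fin.cases with
  | zero => simpa using h0.symm
  | succ q => simpa using hv q

lemma mem_Ch_iff_nat {m : ℕ} {x : ℝ} {v : Fin m → ℝ} {w : ℕ → ℝ} (h0 : w 0 = x)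
    (hv : ∀ i : Fin m, v i = w (i+1)) :
    v ∈ Ch m x ↔ ∀ i : ℕ, i < m → w (i+1) < w i := by
  constructor
  · intro h i hi
    have := h ⟨i, hi⟩
    rwa [cons_eq_word h0 hv, hv] at this
  · intro h i
    rw [cons_eq_word h0 hv, hv]
    exact h i i.isLt

lemma mem_Wg_iff_nat {m : ℕ} {x : ℝ} {u : Fin (m+1) → ℝ} {w : ℕ → ℝ} (h0 : w 0 = x)
    (hu : ∀ i : Fin (m+1), u i = w (i+1)) :
    u ∈ Wg m x ↔ (∀ i : ℕ, i < m → w (i+1) < w i) ∧ w m < w (m+1) := by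
  have hv : ∀ i : Fin m, u i.castSucc = w (i+1) := fun i => by
    rw [hu i.castSucc]; simp
  unfold Wg
  rw [Set.mem_setOf_eq, mem_Ch_iff_nat h0 hv, cons_eq_word h0 hv (Fin.last m), hu (Fin.last m)]
  simp

lemma mem_Ch_succ {m : ℕ} {x : ℝ} {u : Fin (m+1) → ℝ} :
    u ∈ Ch (m+1) x ↔ u 0 < x ∧ Fin.tail u ∈ Ch m (u 0) := by
  have h3 : fcons (u 0) (Fin.tail u) = u := Fin.cons_self_tail u
  constructor
  · intro h
    refine ⟨by simpa using h 0, fun j => ?_⟩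
    rw [h3]
    have := h j.succ
    rwa [← Fin.succ_castSucc, fcons_succ] at this
  · rintro ⟨h0, h⟩ i
    induction i using Fin.cases with
    | zero => simpa using h0
    | succ q =>
      have := h q
      rw [h3] at this
      rwa [← Fin.succ_castSucc, fcons_succ]

lemma Ch_measure : ∀ (m : ℕ) {x : ℝ}, x ∈ Icc (0:ℝ) 1 →
    pim m (Ch m x) = ENNReal.ofReal (x ^ m / m.factorial) := by
  intro m
  induction m with
  | zero =>
    intro x hx
    have : Ch 0 x = univ := by ext u; simp [Ch]
    rw [this, measure_univ]
    simp
  | succ m ih =>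
    intro x hx
    obtain ⟨hx0, hx1⟩ := hx
    set e := MeasurableEquiv.piFinSuccAbove (fun _ : Fin (m+1) => ℝ) 0 with he
    have hmp := measurePreserving_piFinSuccAbove (fun _ : Fin (m+1) => um) 0
    set S : Set (ℝ × (Fin m → ℝ)) := {p | p.1 < x ∧ p.2 ∈ Ch m p.1} with hS
    have hSmeas : MeasurableSet S := by
      have : S = {p : ℝ × (Fin m → ℝ) | p.1 < x} ∩ {p | p.2 ∈ Ch m p.1} := by
        ext p; simp [hS]
      rw [this]
      exact (measurableSet_lt measurable_fst measurable_const).inter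
        (measurableSet_mem_Ch measurable_fst measurable_snd)
    have hset : Ch (m+1) x = e ⁻¹' S := by
      ext u
      have heu : e u = (u 0, Fin.tail u) := rfl
      rw [Set.mem_preimage, heu, mem_Ch_succ]
      rfl
    have h1 : pim (m+1) (Ch (m+1) x) = (um.prod (pim m)) S := by
      rw [hset, ← Measure.map_apply e.measurable hSmeas]
      congr 1
      exact hmp.map_eq
    rw [h1, Measure.prod_apply hSmeas]
    have h2 : ∀ y, pim m (Prod.mk y ⁻¹' S) = (Iio x).indicator (fun y => pim m (Ch m y)) y := by
      intro y
      by_cases h : y < x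
      · rw [indicator_of_mem (mem_Iio.2 h)]
        congr 1
        ext v; simp [hS, h]
      · rw [indicator_of_notMem (by simpa using h)]
        have : Prod.mk y ⁻¹' S = ∅ := by ext v; simp [hS, h]
        rw [this, measure_empty]
    simp only [h2]
    rw [lintegral_indicator measurableSet_Iio]
    have hres : um.restrict (Iio x) = volume.restrict (Ico 0 x) := by
      rw [um, Measure.restrict_restrict measurableSet_Iio]
      congr 1
      ext y
      simp only [mem_inter_iff, mem_Iio, mem_Icc, mem_Ico]
      constructor
      · rintro ⟨h1, h2, _⟩; exact ⟨h2, h1⟩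
      · rintro ⟨h1, h2⟩; exact ⟨h2, h1, (h2.trans_le hx1).le⟩
    rw [hres, setLIntegral_congr_fun measurableSet_Ico
      (fun y hy => ih ⟨hy.1, (hy.2.trans_le hx1).le⟩)]
    rw [setLIntegral_congr Ico_ae_eq_Ioc]
    have hint : IntegrableOn (fun y : ℝ => y ^ m / m.factorial) (Ioc 0 x) volume :=
      (((continuous_pow m).div_const _).integrableOn_Icc).mono_set Ioc_subset_Icc_self
    rw [← ofReal_integral_eq_lintegral_ofReal hint
      ((ae_restrict_iff' measurableSet_Ioc).2 (ae_of_all _ fun y hy =>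
        div_nonneg (pow_nonneg hy.1.le m) (Nat.cast_nonneg _)))]
    congr 1
    rw [← intervalIntegral.integral_of_le hx0, intervalIntegral.integral_div,
      integral_pow]
    have hfac : ((m+1).factorial : ℝ) = (m+1) * m.factorial := by
      push_cast [Nat.factorial_succ]; ring
    rw [hfac]
    have h1 : (m.factorial : ℝ) ≠ 0 := Nat.cast_ne_zero.2 (Nat.factorial_ne_zero m)
    have h2 : ((m:ℝ)+1) ≠ 0 := by positivity
    field_simp
    simp

lemma mem_Ch_last {m : ℕ} {x : ℝ} {u : Fin (m+1) → ℝ} :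
    u ∈ Ch (m+1) x ↔ (fun i : Fin m => u i.castSucc) ∈ Ch m x ∧
      u (Fin.last m) < fcons x (fun i : Fin m => u i.castSucc) (Fin.last m) := by
  unfold Ch
  rw [Set.mem_setOf_eq, Fin.forall_fin_succ']
  constructor
  · rintro ⟨h1, h2⟩
    refine ⟨fun i => ?_, ?_⟩
    · have := h1 i
      rwa [cons_castSucc] at this
    · rwa [cons_castSucc] at h2
  · rintro ⟨h1, h2⟩
    refine ⟨fun i => ?_, ?_⟩
    · rw [cons_castSucc]; exact h1 i
    · rwa [cons_castSucc]

lemma Wg_measure (m : ℕ) {x : ℝ} (hx : x ∈ Icc (0:ℝ) 1) :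
    pim (m+1) (Wg m x) =
      ENNReal.ofReal (x ^ m / m.factorial - x ^ (m+1) / (m+1).factorial) := by
  classical
  set c : (Fin (m+1) → ℝ) → ℝ := fun u => fcons x (fun i : Fin m => u i.castSucc) (Fin.last m)
    with hc
  have hgD : Measurable fun (u : Fin (m+1) → ℝ) => (fun i : Fin m => u i.castSucc) :=
    measurable_pi_lambda _ fun i => measurable_pi_apply i.castSucc
  have hcmeas : Measurable c := measurable_cons_apply (Fin.last m) measurable_const hgD
  set D : Set (Fin (m+1) → ℝ) := {u | (fun i : Fin m => u i.castSucc) ∈ Ch m x} with hD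
  set N : Set (Fin (m+1) → ℝ) := {u | u (Fin.last m) = c u} with hN
  have hDmeas : MeasurableSet D := measurableSet_mem_Ch measurable_const hgD
  have hNmeas : MeasurableSet N :=
    measurableSet_eq_fun (measurable_pi_apply (Fin.last m)) hcmeas
  -- the equiv extracting the last coordinate
  set e := MeasurableEquiv.piFinSuccAbove (fun _ : Fin (m+1) => ℝ) (Fin.last m) with he
  have hmp := measurePreserving_piFinSuccAbove (fun _ : Fin (m+1) => um) (Fin.last m)
  have happ : ∀ u : Fin (m+1) → ℝ, e u = (u (Fin.last m), fun j : Fin m => u j.castSucc) := by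
    intro u
    have : e u = (u (Fin.last m), fun j : Fin m => u ((Fin.last m).succAbove j)) := rfl
    rw [this]
    simp
  have hmap : ∀ (S : Set (ℝ × (Fin m → ℝ))), MeasurableSet S →
      pim (m+1) (e ⁻¹' S) = (um.prod (pim m)) S := by
    intro S hS
    rw [← Measure.map_apply e.measurable hS]
    congr 1
    exact hmp.map_eq
  -- measure of D
  have hDset : D = e ⁻¹' (univ ×ˢ Ch m x) := by
    ext u; rw [Set.mem_preimage, happ u]; simp [hD]
  have hDval : pim (m+1) D = ENNReal.ofReal (x ^ m / m.factorial) := by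
    rw [hDset, hmap _ (MeasurableSet.univ.prod measurableSet_Ch), Measure.prod_prod,
      measure_univ, one_mul, Ch_measure m hx]
  -- N is null
  have hNval : pim (m+1) N = 0 := by
    have hNset : N = e ⁻¹' {p : ℝ × (Fin m → ℝ) | p.1 = fcons x p.2 (Fin.last m)} := by
      ext u; rw [Set.mem_preimage, happ u]; exact Iff.rfl
    have hSm : MeasurableSet {p : ℝ × (Fin m → ℝ) | p.1 = fcons x p.2 (Fin.last m)} :=
      measurableSet_eq_fun measurable_fst
        (measurable_cons_apply (Fin.last m) measurable_const measurable_snd)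
    rw [hNset, hmap _ hSm, Measure.prod_apply_symm hSm]
    have hz : ∀ v : Fin m → ℝ,
        um ((fun y => (y, v)) ⁻¹' {p : ℝ × (Fin m → ℝ) | p.1 = fcons x p.2 (Fin.last m)}) = 0 := by
      intro v
      have hv : ((fun y => (y, v)) ⁻¹' {p : ℝ × (Fin m → ℝ) | p.1 = fcons x p.2 (Fin.last m)})
          = {fcons x v (Fin.last m)} := by ext y; simp
      rw [hv]
      exact measure_singleton _
    rw [lintegral_congr hz, lintegral_zero]
  -- decomposition
  set B := Ch (m+1) x with hB
  have hBD : B ⊆ D := fun u hu => (mem_Ch_last.1 hu).1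
  have hWD : Wg m x = D \ ((B ∪ N) ∩ D) := by
    ext u
    simp only [Wg, mem_setOf_eq, mem_diff, mem_inter_iff, mem_union, hD, hN, hB]
    constructor
    · rintro ⟨h1, h2⟩
      refine ⟨h1, ?_⟩
      rintro ⟨hBN, _⟩
      rcases hBN with hmem | hmem
      · exact absurd (mem_Ch_last.1 hmem).2 (not_lt.2 h2.le)
      · have h2' : c u < u (Fin.last m) := h2
        exact absurd hmem (Ne.symm (ne_of_lt h2'))
    · rintro ⟨h1, h2⟩
      refine ⟨h1, ?_⟩
      rcases lt_trichotomy (u (Fin.last m)) (c u) with h | h | h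
      · exact absurd ⟨Or.inl (mem_Ch_last.2 ⟨h1, h⟩), h1⟩ h2
      · exact absurd ⟨Or.inr h, h1⟩ h2
      · exact h
  have hfin : pim (m+1) ((B ∪ N) ∩ D) ≠ ⊤ := measure_ne_top _ _
  have hsub : (B ∪ N) ∩ D ⊆ D := inter_subset_right
  have hBNval : pim (m+1) ((B ∪ N) ∩ D) = ENNReal.ofReal (x ^ (m+1) / (m+1).factorial) := by
    have hup : pim (m+1) ((B ∪ N) ∩ D) ≤ pim (m+1) B := by
      calc pim (m+1) ((B ∪ N) ∩ D) ≤ pim (m+1) (B ∪ N) := measure_mono inter_subset_left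
        _ ≤ pim (m+1) B + pim (m+1) N := measure_union_le _ _
        _ = pim (m+1) B := by rw [hNval, add_zero]
    have hlow : pim (m+1) B ≤ pim (m+1) ((B ∪ N) ∩ D) :=
      measure_mono (subset_inter (subset_union_left) hBD)
    rw [le_antisymm hup hlow, hB, Ch_measure (m+1) hx]
  have hmeasBN : MeasurableSet ((B ∪ N) ∩ D) :=
    ((measurableSet_Ch.union hNmeas).inter hDmeas)
  rw [hWD, measure_diff hsub hmeasBN.nullMeasurableSet hfin, hDval, hBNval,
    ENNReal.ofReal_sub _ (div_nonneg (pow_nonneg hx.1 _) (Nat.cast_nonneg _))]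

noncomputable def Wpoly (m : ℕ) (x : ℝ) : ℝ := x ^ m / m.factorial - x ^ (m+1) / (m+1).factorial

lemma Wpoly_continuous (m : ℕ) : Continuous (Wpoly m) :=
  ((continuous_pow m).div_const _).sub ((continuous_pow (m+1)).div_const _)

lemma Wpoly_nonneg (m : ℕ) {x : ℝ} (hx : x ∈ Icc (0:ℝ) 1) : 0 ≤ Wpoly m x := by
  have h1 : x ^ (m+1) ≤ x ^ m := pow_le_pow_of_le_one hx.1 hx.2 (Nat.le_succ m)
  have h2 : (m.factorial : ℝ) ≤ ((m+1).factorial : ℝ) := by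
    exact_mod_cast Nat.factorial_le (Nat.le_succ m)
  have h3 : (0:ℝ) < m.factorial := by exact_mod_cast Nat.factorial_pos m
  exact sub_nonneg.2 (div_le_div₀ (pow_nonneg hx.1 m) h1 h3 h2)

lemma hasSum_Wpoly (x : ℝ) : HasSum (fun n : ℕ => Wpoly (2*n) x) (Real.exp (-x)) := by
  have hf : HasSum (fun n : ℕ => (-x) ^ n / n.factorial) (Real.exp (-x)) := by
    rw [Real.exp_eq_exp_ℝ]
    exact NormedSpace.expSeries_div_hasSum_exp (-x)
  have hs := hf.summable
  have he : Summable (fun n : ℕ => (-x) ^ (2*n) / (2*n).factorial) :=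
    hs.comp_injective (fun p q h => by omega)
  have ho : Summable (fun n : ℕ => (-x) ^ (2*n+1) / (2*n+1).factorial) :=
    hs.comp_injective (fun p q h => by omega)
  have hEO : HasSum (fun n : ℕ => (-x) ^ n / n.factorial)
      ((∑' n, (-x) ^ (2*n) / (2*n).factorial) + ∑' n, (-x) ^ (2*n+1) / (2*n+1).factorial) :=
    HasSum.even_add_odd he.hasSum ho.hasSum
  have hsum := he.hasSum.add ho.hasSum
  rw [hf.unique hEO] at *
  convert hsum using 2 with n
  have h1 : (-x) ^ (2*n) = x ^ (2*n) := Even.neg_pow (even_two_mul n) x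
  have h2 : (-x) ^ (2*n+1) = -(x ^ (2*n+1)) := Odd.neg_pow (odd_two_mul_add_one n) x
  rw [Wpoly, h1, h2]
  ring

lemma map_eq_pi {n : ℕ} (P : Measure (ℤ → ℝ)) (hP : IsUniformProduct P)
    (ι : Fin n → ℤ) (hι : Function.Injective ι) :
    P.map (fun T p => T (ι p)) = Measure.pi (fun _ : Fin n => um) := by
  classical
  have hΨ : Measurable (fun (T : ℤ → ℝ) (p : Fin n) => T (ι p)) :=
    measurable_pi_lambda _ fun p => measurable_pi_apply (ι p)
  refine (Measure.pi_eq fun s hs => ?_).symm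
  rw [Measure.map_apply hΨ (MeasurableSet.univ_pi hs)]
  set A : ℤ → Set ℝ := fun z => ⋂ (p : Fin n) (_ : ι p = z), s p with hA
  have hAmeas : ∀ z, MeasurableSet (A z) := fun z =>
    MeasurableSet.iInter fun p => MeasurableSet.iInter fun _ => hs p
  have hAι : ∀ p, A (ι p) = s p := by
    intro p
    apply Subset.antisymm
    · intro y hy
      simp only [hA, mem_iInter] at hy
      exact hy p rfl
    · refine subset_iInter₂ fun q hq => ?_
      obtain rfl := hι hq
      exact subset_rfl
  have hpre : (fun (T : ℤ → ℝ) (p : Fin n) => T (ι p)) ⁻¹' (univ.pi s)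
      = {T | ∀ z ∈ Finset.image ι Finset.univ, T z ∈ A z} := by
    ext T
    simp only [mem_preimage, mem_univ_pi, mem_setOf_eq]
    constructor
    · intro h z hz
      rw [Finset.mem_image] at hz
      obtain ⟨p, -, rfl⟩ := hz
      rw [hAι]
      exact h p
    · intro h p
      have := h (ι p) (Finset.mem_image_of_mem ι (Finset.mem_univ p))
      rwa [hAι] at this
  rw [hpre, hP (Finset.image ι Finset.univ) A (fun z _ => hAmeas z),
    Finset.prod_image (fun p _ q _ h => hι h)]
  refine Finset.prod_congr rfl fun p _ => ?_
  rw [hAι]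
  rfl

section Theta
variable (a b : ℕ)

noncomputable def theta : (Fin ((a+1)+(b+1)+1) → ℝ) → ℝ × ((Fin (a+1) → ℝ) × (Fin (b+1) → ℝ)) :=
  fun u => Prod.map id
    (⇑(MeasurableEquiv.sumPiEquivProdPi (fun _ : Fin (a+1) ⊕ Fin (b+1) => ℝ)) ∘
     ⇑(MeasurableEquiv.piCongrLeft (fun _ : Fin ((a+1)+(b+1)) => ℝ) finSumFinEquiv).symm)
    ((MeasurableEquiv.piFinSuccAbove (fun _ : Fin ((a+1)+(b+1)+1) => ℝ) 0) u)

lemma theta_mp : MeasurePreserving (theta a b)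
    (Measure.pi (fun _ : Fin ((a+1)+(b+1)+1) => um))
    (um.prod ((pim (a+1)).prod (pim (b+1)))) := by
  have mp1 := measurePreserving_piFinSuccAbove (fun _ : Fin ((a+1)+(b+1)+1) => um) 0
  have mpc1 := measurePreserving_piCongrLeft (fun _ : Fin ((a+1)+(b+1)) => um) finSumFinEquiv
  have mpc2 := measurePreserving_sumPiEquivProdPi (fun _ : Fin (a+1) ⊕ Fin (b+1) => um)
  have h2 := mpc2.comp (mpc1.symm _)
  exact ((MeasurePreserving.id um).prod h2).comp mp1

lemma theta_apply (u : Fin ((a+1)+(b+1)+1) → ℝ) :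
    theta a b u = (u 0,
      (fun i : Fin (a+1) => u ((Fin.castAdd (b+1) i).succ),
       fun i : Fin (b+1) => u ((Fin.natAdd (a+1) i).succ)) ) := by
  rfl

end Theta

lemma prob_G_eq (P : Measure (ℤ → ℝ)) (hP : IsUniformProduct P) {t : ℝ}
    (ht : t ∈ Icc (0:ℝ) 1) (j k : ℕ) :
    P (G t 0 j k) = ∫⁻ x in Ico (0:ℝ) t,
      ENNReal.ofReal (Wpoly (2*j) x) * ENNReal.ofReal (Wpoly (2*k) x) ∂volume := by
  classical
  set a := 2 * j with ha
  set b := 2 * k with hb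
  -- the index map
  set ι : Fin ((a+1)+(b+1)+1) → ℤ :=
    fun p => if (p:ℕ) ≤ a+1 then -((p:ℕ):ℤ) else ((p:ℕ):ℤ) - (a+1) with hι_def
  have hι : Function.Injective ι := by
    intro p q h
    simp only [hι_def] at h
    have hp := p.isLt
    have hq := q.isLt
    apply Fin.ext
    split_ifs at h <;> omega
  have hι0 : ι 0 = 0 := by simp [hι_def]
  have hιL : ∀ i : Fin (a+1), ι ((Fin.castAdd (b+1) i).succ) = -((i:ℕ):ℤ) - 1 := by
    intro i
    have hi := i.isLt
    simp only [hι_def, Fin.val_succ, Fin.coe_castAdd]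
    rw [if_pos (by omega)]
    push_cast
    ring
  have hιR : ∀ i : Fin (b+1), ι ((Fin.natAdd (a+1) i).succ) = ((i:ℕ):ℤ) + 1 := by
    intro i
    simp only [hι_def, Fin.val_succ, Fin.coe_natAdd]
    rw [if_neg (by omega)]
    push_cast
    ring
  set Ψ : (ℤ → ℝ) → (Fin ((a+1)+(b+1)+1) → ℝ) := fun T p => T (ι p) with hΨdef
  have hΨ : Measurable Ψ := measurable_pi_lambda _ fun p => measurable_pi_apply (ι p)
  -- the event
  set E : Set (ℝ × ((Fin (a+1) → ℝ) × (Fin (b+1) → ℝ))) :=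
    {q | q.1 < t ∧ q.2.1 ∈ Wg a q.1 ∧ q.2.2 ∈ Wg b q.1} with hEdef
  have hE : MeasurableSet E := by
    have : E = {q : ℝ × ((Fin (a+1) → ℝ) × (Fin (b+1) → ℝ)) | q.1 < t}
        ∩ ({q | q.2.1 ∈ Wg a q.1} ∩ {q | q.2.2 ∈ Wg b q.1}) := by
      ext q; simp [hEdef, and_assoc]
    rw [this]
    exact (measurableSet_lt measurable_fst measurable_const).inter
      ((measurableSet_mem_Wg measurable_fst (measurable_fst.comp measurable_snd)).inter
        (measurableSet_mem_Wg measurable_fst (measurable_snd.comp measurable_snd)))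
  -- the event correspondence
  have hGpre : G t 0 j k = Ψ ⁻¹' (theta a b ⁻¹' E) := by
    ext T
    rw [mem_preimage, mem_preimage, theta_apply]
    simp only [hΨdef, hι0, hιL, hιR, hEdef, mem_setOf_eq]
    rw [mem_Wg_iff_nat (w := fun n : ℕ => T (-(n:ℤ))) (by norm_num)
        (fun i => congrArg T (by push_cast; ring)),
      mem_Wg_iff_nat (w := fun n : ℕ => T ((n:ℤ))) (by norm_num)
        (fun i => congrArg T (by push_cast; ring))]
    unfold G
    simp only [mem_setOf_eq]
    constructor
    · rintro ⟨h1, h2, h3, h4, h5⟩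
      refine ⟨h1, ⟨fun i hi => ?_, ?_⟩, fun i hi => ?_, ?_⟩
      · convert h2 i hi using 2 <;> omega
      · convert h3 using 2 <;> omega
      · convert h4 i hi using 2 <;> omega
      · convert h5 using 2 <;> omega
    · rintro ⟨h1, ⟨h2, h3⟩, h4, h5⟩
      refine ⟨h1, fun i hi => ?_, ?_, fun i hi => ?_, ?_⟩
      · convert h2 i hi using 2 <;> omega
      · convert h3 using 2 <;> omega
      · convert h4 i hi using 2 <;> omega
      · convert h5 using 2 <;> omega
  -- push through the maps
  have hθmeas : Measurable (theta a b) := (theta_mp a b).measurable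
  have step1 : P (G t 0 j k) = (um.prod ((pim (a+1)).prod (pim (b+1)))) E := by
    rw [hGpre, ← Measure.map_apply hΨ (hθmeas hE), map_eq_pi P hP ι hι,
      ← Measure.map_apply hθmeas hE, (theta_mp a b).map_eq]
  rw [step1, Measure.prod_apply hE]
  have hslice : ∀ x : ℝ, ((pim (a+1)).prod (pim (b+1))) (Prod.mk x ⁻¹' E)
      = (Iio t).indicator (fun x => pim (a+1) (Wg a x) * pim (b+1) (Wg b x)) x := by
    intro x
    by_cases h : x < t
    · rw [indicator_of_mem (mem_Iio.2 h)]
      have : Prod.mk x ⁻¹' E = Wg a x ×ˢ Wg b x := by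
        ext v; simp [hEdef, h]
      rw [this, Measure.prod_prod]
    · rw [indicator_of_notMem (by simpa using h)]
      have : Prod.mk x ⁻¹' E = ∅ := by
        ext v; simp [hEdef, h]
      rw [this, measure_empty]
  simp only [hslice]
  rw [lintegral_indicator measurableSet_Iio]
  have hres : um.restrict (Iio t) = volume.restrict (Ico 0 t) := by
    rw [um, Measure.restrict_restrict measurableSet_Iio]
    congr 1
    ext y
    simp only [mem_inter_iff, mem_Iio, mem_Icc, mem_Ico]
    constructor
    · rintro ⟨h1, h2, _⟩; exact ⟨h2, h1⟩
    · rintro ⟨h1, h2⟩; exact ⟨h2, h1, (h2.trans_le ht.2).le⟩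
  rw [hres]
  refine setLIntegral_congr_fun measurableSet_Ico (fun x hx => ?_)
  have hx1 : x ∈ Icc (0:ℝ) 1 := ⟨hx.1, (hx.2.trans_le ht.2).le⟩
  rw [Wg_measure a hx1, Wg_measure b hx1]
  rfl

theorem sum_prob_G (P : Measure (ℤ → ℝ)) (hP : IsUniformProduct P)
    (t : ℝ) (ht : t ∈ Icc (0 : ℝ) 1) (k : ℕ) :
    HasSum (fun j : ℕ => (P (G t 0 j k)).toReal)
      (Real.exp (-t) * t ^ (2 * k + 1) / (Nat.factorial (2 * k + 1))) := by
  have hWm : ∀ m, Measurable fun x : ℝ => ENNReal.ofReal (Wpoly m x) := fun m =>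
    ENNReal.measurable_ofReal.comp (Wpoly_continuous m).measurable
  -- the tsum computation
  have htsum : ∑' j : ℕ, P (G t 0 j k)
      = ENNReal.ofReal (Real.exp (-t) * t ^ (2 * k + 1) / (Nat.factorial (2 * k + 1))) := by
    simp only [prob_G_eq P hP ht]
    rw [← lintegral_tsum (f := fun j x => ENNReal.ofReal (Wpoly (2*j) x) * ENNReal.ofReal (Wpoly (2*k) x)) (fun j => ((hWm (2*j)).mul (hWm (2*k))).aemeasurable)]
    have hcongr : ∀ x ∈ Ico (0:ℝ) t,
        ∑' j : ℕ, ENNReal.ofReal (Wpoly (2*j) x) * ENNReal.ofReal (Wpoly (2*k) x)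
          = ENNReal.ofReal (Real.exp (-x) * Wpoly (2*k) x) := by
      intro x hx
      have hx1 : x ∈ Icc (0:ℝ) 1 := ⟨hx.1, (hx.2.trans_le ht.2).le⟩
      rw [ENNReal.tsum_mul_right, ← ENNReal.ofReal_tsum_of_nonneg
        (fun j => Wpoly_nonneg (2*j) hx1) (hasSum_Wpoly x).summable,
        (hasSum_Wpoly x).tsum_eq, ← ENNReal.ofReal_mul (Real.exp_pos (-x)).le]
    rw [setLIntegral_congr_fun measurableSet_Ico hcongr]
    rw [setLIntegral_congr Ico_ae_eq_Ioc]
    have hcont : Continuous fun x : ℝ => Real.exp (-x) * Wpoly (2*k) x :=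
      (Real.continuous_exp.comp continuous_neg).mul (Wpoly_continuous (2*k))
    rw [← ofReal_integral_eq_lintegral_ofReal
      (hcont.integrableOn_Icc.mono_set Ioc_subset_Icc_self)
      ((ae_restrict_iff' measurableSet_Ioc).2 (ae_of_all _ fun x hx =>
        mul_nonneg (Real.exp_pos (-x)).le
          (Wpoly_nonneg (2*k) ⟨hx.1.le, hx.2.trans ht.2⟩)))]
    congr 1
    rw [← intervalIntegral.integral_of_le ht.1]
    have hderiv : ∀ x ∈ uIcc (0:ℝ) t,
        HasDerivAt (fun y : ℝ => Real.exp (-y) * (y ^ (2*k+1) / ((2*k+1).factorial : ℝ)))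
          (Real.exp (-x) * Wpoly (2*k) x) x := by
      intro x _
      have hd1 : HasDerivAt (fun y : ℝ => Real.exp (-y)) (Real.exp (-x) * (-1)) x :=
        (hasDerivAt_neg x).exp
      have hd2 : HasDerivAt (fun y : ℝ => y ^ (2*k+1) / ((2*k+1).factorial : ℝ))
          (((2*k+1 : ℕ) : ℝ) * x ^ (2*k) / ((2*k+1).factorial : ℝ)) x := by
        simpa using (hasDerivAt_pow (2*k+1) x).div_const ((2*k+1).factorial : ℝ)
      have : HasDerivAt (fun y : ℝ => Real.exp (-y) * (y ^ (2*k+1) / ((2*k+1).factorial : ℝ))) _ x :=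
        hd1.mul hd2
      convert this using 1
      have hfac : (((2*k+1) : ℕ).factorial : ℝ) = ((2*k+1 : ℕ) : ℝ) * ((2*k).factorial : ℝ) := by
        rw [show (2*k+1) = (2*k) + 1 from rfl, Nat.factorial_succ]
        push_cast
        ring
      have h1 : ((2*k).factorial : ℝ) ≠ 0 := Nat.cast_ne_zero.2 (Nat.factorial_ne_zero _)
      have h2 : ((2*k+1 : ℕ) : ℝ) ≠ 0 := by positivity
      rw [Wpoly, hfac]
      field_simp
      ring
    rw [intervalIntegral.integral_eq_sub_of_hasDerivAt hderiv (hcont.intervalIntegrable 0 t)]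
    simp [mul_div_assoc]
  have hne : (∑' j : ℕ, P (G t 0 j k)) ≠ ⊤ := by
    rw [htsum]; exact ENNReal.ofReal_ne_top
  have hne' : ∀ j : ℕ, P (G t 0 j k) ≠ ⊤ := fun j =>
    ne_top_of_le_ne_top hne (ENNReal.le_tsum j)
  have hfin := ENNReal.hasSum_toReal hne
  rwa [← ENNReal.tsum_toReal_eq hne', htsum, ENNReal.toReal_ofReal (div_nonneg (mul_nonneg (Real.exp_pos _).le (pow_nonneg ht.1 _)) (Nat.cast_nonneg _))] at hfin
end

section
/- For every t ∈ [0,1] and every integer k ≥ 0, ℙ(B_k(t)) = t^{2k+2}/(2k+2)! − t^{2k+3}/(2k+3)!. -/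
open MeasureTheory Set

/-- The event `B_k(t) = {t > t₀ > t₁ > ⋯ > t_{2k+1}} ∩ {t_{2k+2} > t_{2k+1}}`. -/
def B (t : ℝ) (k : ℕ) : Set (ℤ → ℝ) :=
  {T | T 0 < t ∧ (∀ i : ℕ, i < 2 * k + 1 → T ((i : ℤ) + 1) < T (i : ℤ)) ∧
    T (2 * k + 1 : ℕ) < T (2 * k + 2 : ℕ)}

noncomputable def mU : Measure ℝ := volume.restrict (Icc 0 1)

instance : IsProbabilityMeasure mU := ⟨by simp [mU, Real.volume_Icc]⟩

def chainSet (t : ℝ) (m : ℕ) : Set (Fin m → ℝ) :=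
  {x | (∀ i : Fin m, (i : ℕ) = 0 → x i < t) ∧
       ∀ i j : Fin m, (i : ℕ) = (j : ℕ) + 1 → x i < x j}

lemma measurableSet_chainSet (t : ℝ) (m : ℕ) : MeasurableSet (chainSet t m) := by
  unfold chainSet
  rw [setOf_and]
  apply MeasurableSet.inter
  · rw [setOf_forall]
    refine MeasurableSet.iInter fun i => ?_
    by_cases h : (i : ℕ) = 0
    · simp only [h]
      simpa using measurableSet_lt (measurable_pi_apply i) measurable_const
    · simp [h]
  · rw [setOf_forall]
    refine MeasurableSet.iInter fun i => ?_
    rw [setOf_forall]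
    refine MeasurableSet.iInter fun j => ?_
    by_cases h : (i : ℕ) = (j : ℕ) + 1
    · simp only [h]
      simpa using measurableSet_lt (measurable_pi_apply i) (measurable_pi_apply j)
    · simp [h]

lemma chain_split (t : ℝ) (m : ℕ) :
    chainSet t (m + 1) =
      (MeasurableEquiv.piFinSuccAbove (fun _ : Fin (m + 1) => ℝ) 0) ⁻¹'
        {p : ℝ × (Fin m → ℝ) | p.1 < t ∧ p.2 ∈ chainSet p.1 m} := by
  ext x
  simp only [chainSet, MeasurableEquiv.piFinSuccAbove, MeasurableEquiv.coe_mk,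
    Equiv.coe_fn_mk, mem_preimage, mem_setOf_eq, Fin.insertNthEquiv,
    Equiv.coe_fn_symm_mk, Fin.zero_succAbove]
  constructor
  · rintro ⟨h0, hadj⟩
    refine ⟨h0 0 rfl, fun i hi => ?_, fun i j hij => ?_⟩
    · exact hadj i.succ 0 (by simpa using hi)
    · exact hadj i.succ j.succ (by simpa using hij)
  · rintro ⟨h0, h1, h2⟩
    constructor
    · intro i hi
      have : i = 0 := Fin.ext hi
      rwa [this]
    · intro i j hij
      have hjm : (j : ℕ) < m + 1 := j.isLt
      have him : (i : ℕ) < m + 1 := i.isLt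
      have hj' : (j : ℕ) < m := by omega
      have hr : ∀ a : Fin m, Fin.removeNth 0 x a = x a.succ := fun a => by
        simp [Fin.removeNth, Fin.zero_succAbove]
      simp only [hr] at h1 h2
      rcases Nat.eq_zero_or_pos (j : ℕ) with hj0 | hjpos
      · have hj : x j = x 0 := congrArg x (Fin.ext hj0)
        have hi2 : x i = x (⟨(j : ℕ), hj'⟩ : Fin m).succ :=
          congrArg x (Fin.ext (by simp [hij]))
        rw [hi2, hj]
        exact h1 ⟨(j : ℕ), hj'⟩ hj0
      · have hj1 : (j : ℕ) - 1 < m := by omega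
        have hi2 : x i = x (⟨(j : ℕ), hj'⟩ : Fin m).succ :=
          congrArg x (Fin.ext (by simp [hij]))
        have hj2 : x j = x (⟨(j : ℕ) - 1, hj1⟩ : Fin m).succ :=
          congrArg x (Fin.ext (by simp; omega))
        rw [hi2, hj2]
        exact h2 _ _ (by simp; omega)

lemma chain_measure : ∀ (m : ℕ), ∀ t ∈ Icc (0:ℝ) 1,
    Measure.pi (fun _ : Fin m => mU) (chainSet t m) =
      ENNReal.ofReal (t ^ m / (Nat.factorial m)) := by
  intro m
  induction m with
  | zero =>
    intro t _
    have : chainSet t 0 = univ := by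
      ext x; simp [chainSet]
    simp [this]
  | succ m ih =>
    intro t ht
    set ν := Measure.pi (fun _ : Fin m => mU) with hν
    set Bp : Set (ℝ × (Fin m → ℝ)) :=
      {p | p.1 < t ∧ p.2 ∈ chainSet p.1 m} with hBp
    have hBm : MeasurableSet Bp := by
      have h1 : MeasurableSet {p : ℝ × (Fin m → ℝ) | p.1 < t} :=
        measurableSet_lt measurable_fst measurable_const
      have h2 : MeasurableSet {p : ℝ × (Fin m → ℝ) | p.2 ∈ chainSet p.1 m} := by
        have : {p : ℝ × (Fin m → ℝ) | p.2 ∈ chainSet p.1 m} =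
            (⋂ i : Fin m, {p : ℝ × (Fin m → ℝ) | (i : ℕ) = 0 → p.2 i < p.1}) ∩
            (⋂ i : Fin m, ⋂ j : Fin m,
              {p : ℝ × (Fin m → ℝ) | (i : ℕ) = (j : ℕ) + 1 → p.2 i < p.2 j}) := by
          ext p; simp [chainSet]
        rw [this]
        apply MeasurableSet.inter
        · refine MeasurableSet.iInter fun i => ?_
          by_cases h : (i : ℕ) = 0
          · simp only [h]
            have : Measurable fun p : ℝ × (Fin m → ℝ) => p.2 i := measurable_snd.eval
            simpa using measurableSet_lt this measurable_fst
          · simp [h]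
        · refine MeasurableSet.iInter fun i => MeasurableSet.iInter fun j => ?_
          by_cases h : (i : ℕ) = (j : ℕ) + 1
          · simp only [h]
            have h1 : Measurable fun p : ℝ × (Fin m → ℝ) => p.2 i := measurable_snd.eval
            have h2 : Measurable fun p : ℝ × (Fin m → ℝ) => p.2 j := measurable_snd.eval
            simpa using measurableSet_lt h1 h2
          · simp [h]
      have : Bp = {p : ℝ × (Fin m → ℝ) | p.1 < t} ∩
          {p : ℝ × (Fin m → ℝ) | p.2 ∈ chainSet p.1 m} := by
        ext p; simp [hBp]
      rw [this]; exact h1.inter h2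
    have hmp := measurePreserving_piFinSuccAbove (fun _ : Fin (m + 1) => mU) 0
    have key : Measure.pi (fun _ : Fin (m + 1) => mU) (chainSet t (m + 1)) =
        (mU.prod ν) Bp := by
      rw [chain_split]
      exact hmp.measure_preimage hBm.nullMeasurableSet
    rw [key, Measure.prod_apply hBm]
    have hsec : ∀ a : ℝ, (Prod.mk a ⁻¹' Bp) = {y : Fin m → ℝ | a < t ∧ y ∈ chainSet a m} := by
      intro a; rfl
    have hcong : ∫⁻ a, ν (Prod.mk a ⁻¹' Bp) ∂mU =
        ∫⁻ a in Icc (0:ℝ) 1, (Iio t).indicator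
          (fun a => ENNReal.ofReal (a ^ m / (Nat.factorial m))) a ∂volume := by
      rw [mU]
      refine setLIntegral_congr_fun measurableSet_Icc (fun a ha => ?_)
      rw [hsec a]
      by_cases h : a < t
      · have : {y : Fin m → ℝ | a < t ∧ y ∈ chainSet a m} = chainSet a m := by
          ext y; simp [h]
        rw [this, ih a ⟨ha.1, ha.2⟩, indicator_of_mem (mem_Iio.mpr h)]
      · have : {y : Fin m → ℝ | a < t ∧ y ∈ chainSet a m} = ∅ := by
          ext y; simp [h]
        rw [this, measure_empty, indicator_of_notMem (fun hc => h (mem_Iio.mp hc))]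
    rw [hcong, lintegral_indicator measurableSet_Iio _, Measure.restrict_restrict measurableSet_Iio]
    have hIco : Iio t ∩ Icc (0:ℝ) 1 = Ico 0 t := by
      ext a
      simp only [mem_inter_iff, mem_Iio, mem_Icc, mem_Ico]
      constructor
      · rintro ⟨h1, h2, _⟩; exact ⟨h2, h1⟩
      · rintro ⟨h1, h2⟩; exact ⟨h2, h1, le_trans (le_of_lt h2) ht.2⟩
    rw [hIco]
    have hInt : IntegrableOn (fun a : ℝ => a ^ m / (Nat.factorial m)) (Ico 0 t) volume := by
      exact (((continuous_pow m).div_const _).integrableOn_Icc).mono_set Ico_subset_Icc_self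
    have hNon : 0 ≤ᵐ[volume.restrict (Ico 0 t)] fun a : ℝ => a ^ m / (Nat.factorial m) := by
      filter_upwards [ae_restrict_mem measurableSet_Ico] with a ha
      have : (0:ℝ) ≤ a := ha.1
      positivity
    rw [← ofReal_integral_eq_lintegral_ofReal hInt hNon]
    rw [integral_Ico_eq_integral_Ioo, ← integral_Ioc_eq_integral_Ioo, ← intervalIntegral.integral_of_le ht.1]
    rw [intervalIntegral.integral_div, integral_pow]
    congr 1
    rw [Nat.factorial_succ]
    have hm : ((m:ℝ) + 1) ≠ 0 := by positivity
    have hf : ((Nat.factorial m : ℝ)) ≠ 0 := by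
      exact_mod_cast Nat.factorial_ne_zero m
    push_cast
    rw [zero_pow (by omega : m + 1 ≠ 0)]
    field_simp
    rw [sub_zero]

lemma measure_prefix_chain (m : ℕ) (t : ℝ) (ht : t ∈ Icc (0:ℝ) 1) :
    Measure.pi (fun _ : Fin (m + 1) => mU)
      ((fun x : Fin (m + 1) → ℝ => x ∘ Fin.castSucc) ⁻¹' chainSet t m) =
      ENNReal.ofReal (t ^ m / (Nat.factorial m)) := by
  have hC := measurableSet_chainSet t m
  have hmp := measurePreserving_piFinSuccAbove (fun _ : Fin (m + 1) => mU) (Fin.last m)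
  have hpre : ((fun x : Fin (m + 1) → ℝ => x ∘ Fin.castSucc) ⁻¹' chainSet t m) =
      (MeasurableEquiv.piFinSuccAbove (fun _ : Fin (m + 1) => ℝ) (Fin.last m)) ⁻¹'
        (univ ×ˢ chainSet t m) := by
    ext x
    simp only [mem_preimage, MeasurableEquiv.piFinSuccAbove, MeasurableEquiv.coe_mk,
      Equiv.coe_fn_mk, Fin.insertNthEquiv, Equiv.coe_fn_symm_mk, mem_prod, mem_univ, true_and]
    have h : Fin.removeNth (Fin.last m) x = x ∘ Fin.castSucc := by
      funext j; simp [Fin.removeNth, Fin.succAbove_last]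
    rw [h]
  rw [hpre, hmp.measure_preimage (MeasurableSet.univ.prod hC).nullMeasurableSet,
    Measure.prod_prod, measure_univ, one_mul]
  exact chain_measure m t ht

lemma diag_null (m : ℕ) (j : Fin m) :
    Measure.pi (fun _ : Fin (m + 1) => mU)
      {x : Fin (m + 1) → ℝ | x (Fin.last m) = x j.castSucc} = 0 := by
  have hmp := measurePreserving_piFinSuccAbove (fun _ : Fin (m + 1) => mU) (Fin.last m)
  set Dp : Set (ℝ × (Fin m → ℝ)) := {p | p.1 = p.2 j} with hDpdef
  have hDp : MeasurableSet Dp :=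
    measurableSet_eq_fun measurable_fst measurable_snd.eval
  have hpre : {x : Fin (m + 1) → ℝ | x (Fin.last m) = x j.castSucc} =
      (MeasurableEquiv.piFinSuccAbove (fun _ : Fin (m + 1) => ℝ) (Fin.last m)) ⁻¹' Dp := by
    ext x
    simp only [mem_setOf_eq, mem_preimage, MeasurableEquiv.piFinSuccAbove,
      MeasurableEquiv.coe_mk, Equiv.coe_fn_mk, Fin.insertNthEquiv, Equiv.coe_fn_symm_mk,
      hDpdef]
    have h : Fin.removeNth (Fin.last m) x j = x j.castSucc := by
      simp [Fin.removeNth, Fin.succAbove_last]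
    rw [h]
  rw [hpre, hmp.measure_preimage hDp.nullMeasurableSet, Measure.prod_apply_symm hDp]
  have h0 : ∀ y : Fin m → ℝ, mU ((fun a : ℝ => (a, y)) ⁻¹' Dp) = 0 := by
    intro y
    have h1 : ((fun a : ℝ => (a, y)) ⁻¹' Dp) = {y j} := by
      ext a; simp [hDpdef]
    rw [h1, mU, Measure.restrict_apply (measurableSet_singleton _)]
    exact measure_mono_null inter_subset_left Real.volume_singleton
  simp only [h0, lintegral_zero]

lemma chainSet_last (t : ℝ) (m : ℕ) :
    chainSet t (m + 1 + 1) =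
      ((fun x : Fin (m + 1 + 1) → ℝ => x ∘ Fin.castSucc) ⁻¹' chainSet t (m + 1)) ∩
        {x : Fin (m + 1 + 1) → ℝ | x (Fin.last (m + 1)) < x ((Fin.last m).castSucc)} := by
  ext x
  simp only [chainSet, mem_inter_iff, mem_preimage, mem_setOf_eq, Function.comp_apply]
  constructor
  · rintro ⟨h0, hadj⟩
    refine ⟨⟨fun i hi => ?_, fun i j hij => ?_⟩, ?_⟩
    · exact h0 i.castSucc (by simpa using hi)
    · exact hadj i.castSucc j.castSucc (by simpa using hij)
    · exact hadj (Fin.last (m + 1)) ((Fin.last m).castSucc) (by simp)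
  · rintro ⟨⟨h0, hadj⟩, hlt⟩
    refine ⟨fun i hi => ?_, fun i j hij => ?_⟩
    · have hi' : (i : ℕ) < m + 1 := by omega
      have hx : x i = x ((⟨(i : ℕ), hi'⟩ : Fin (m + 1)).castSucc) :=
        congrArg x (Fin.ext (by simp))
      rw [hx]
      exact h0 _ (by simpa using hi)
    · by_cases hil : (i : ℕ) = m + 1
      · have hxj : x j = x ((Fin.last m).castSucc) :=
          congrArg x (Fin.ext (by simp; omega))
        have hxi : x i = x (Fin.last (m + 1)) := congrArg x (Fin.ext (by simp [hil]))
        rw [hxi, hxj]; exact hlt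
      · have hi' : (i : ℕ) < m + 1 := by have := i.isLt; omega
        have hj' : (j : ℕ) < m + 1 := by omega
        have hxi : x i = x ((⟨(i : ℕ), hi'⟩ : Fin (m + 1)).castSucc) :=
          congrArg x (Fin.ext (by simp))
        have hxj : x j = x ((⟨(j : ℕ), hj'⟩ : Fin (m + 1)).castSucc) :=
          congrArg x (Fin.ext (by simp))
        rw [hxi, hxj]
        exact hadj _ _ (by simpa using hij)

lemma measurable_proj (n : ℕ) : Measurable (fun T : ℤ → ℝ => fun i : Fin n => T (i : ℤ)) :=
  measurable_pi_lambda _ fun i => measurable_pi_apply _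

lemma map_pi (P : Measure (ℤ → ℝ)) (hP : IsUniformProduct P) (n : ℕ) :
    P.map (fun T : ℤ → ℝ => fun i : Fin n => T (i : ℤ)) =
      Measure.pi (fun _ : Fin n => mU) := by
  refine (Measure.pi_eq (μ := fun _ : Fin n => mU) fun s hs => ?_).symm
  rw [Measure.map_apply (measurable_proj n) (MeasurableSet.univ_pi hs)]
  classical
  set A : ℤ → Set ℝ := fun j =>
    if h : 0 ≤ j ∧ j < n then s ⟨j.toNat, by omega⟩ else univ with hA
  set F : Finset ℤ := Finset.map
    ⟨fun i : Fin n => (i : ℤ), @id (Function.Injective fun i : Fin n => (i : ℤ)) (fun a b h => by simp only at h; exact Fin.ext (by exact_mod_cast h))⟩ Finset.univ with hF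
  have hAi : ∀ i : Fin n, A (i : ℤ) = s i := by
    intro i
    have h : 0 ≤ (i : ℤ) ∧ (i : ℤ) < n := ⟨Int.natCast_nonneg _, by exact_mod_cast i.isLt⟩
    rw [hA]
    simp only [dif_pos h]
    congr 1
  have hmeas : ∀ i ∈ F, MeasurableSet (A i) := by
    intro j _
    by_cases h : 0 ≤ j ∧ j < (n : ℤ)
    · rw [hA]; simp only [dif_pos h]; exact hs _
    · rw [hA]; simp only [dif_neg h]; exact MeasurableSet.univ
  have hset : (fun T : ℤ → ℝ => fun i : Fin n => T (i : ℤ)) ⁻¹' (univ.pi s) =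
      {T | ∀ j ∈ F, T j ∈ A j} := by
    ext T
    simp only [mem_preimage, mem_pi, mem_univ, forall_true_left, mem_setOf_eq, hF,
      Finset.mem_map, Finset.mem_univ, Function.Embedding.coeFn_mk, true_and]
    constructor
    · rintro h j ⟨i, rfl⟩
      rw [hAi i]; exact h i
    · intro h i
      rw [← hAi i]; exact h _ ⟨i, rfl⟩
  rw [hset, hP F A hmeas, hF, Finset.prod_map]
  exact Finset.prod_congr rfl fun i _ => by rw [Function.Embedding.coeFn_mk, hAi i]; rfl

theorem prob_B (P : Measure (ℤ → ℝ)) (hP : IsUniformProduct P)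
    (t : ℝ) (ht : t ∈ Icc (0 : ℝ) 1) (k : ℕ) :
    (P (B t k)).toReal =
      t ^ (2 * k + 2) / (Nat.factorial (2 * k + 2)) -
        t ^ (2 * k + 3) / (Nat.factorial (2 * k + 3)) := by
  -- work with n = (2k+1) + 1 + 1 coordinates
  set m : ℕ := 2 * k + 1 with hm
  set ν : Measure (Fin (m + 1 + 1) → ℝ) := Measure.pi (fun _ => mU) with hν
  set A1 : Set (Fin (m + 1 + 1) → ℝ) :=
    (fun x : Fin (m + 1 + 1) → ℝ => x ∘ Fin.castSucc) ⁻¹' chainSet t (m + 1) with hA1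
  set c : Fin (m + 1 + 1) := (Fin.last m).castSucc with hc
  set d : Fin (m + 1 + 1) := Fin.last (m + 1) with hd
  set S : Set (Fin (m + 1 + 1) → ℝ) := A1 ∩ {x | x c < x d} with hS
  have hA1meas : MeasurableSet A1 :=
    (measurableSet_chainSet t (m + 1)).preimage
      (measurable_pi_lambda _ fun j => measurable_pi_apply _)
  have hSmeas : MeasurableSet S :=
    hA1meas.inter (measurableSet_lt (measurable_pi_apply c) (measurable_pi_apply d))
  -- translate B to the finite-dimensional set S
  have hBeq : B t k =
      (fun T : ℤ → ℝ => fun i : Fin (m + 1 + 1) => T (i : ℤ)) ⁻¹' S := by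
    ext T
    simp only [B, mem_setOf_eq, hS, hA1, mem_preimage, mem_inter_iff, chainSet,
      Function.comp_apply]
    constructor
    · rintro ⟨h0, hadj, hlast⟩
      refine ⟨⟨fun i hi => ?_, fun i j hij => ?_⟩, ?_⟩
      · have he : (((i.castSucc : Fin (m + 1 + 1)) : ℕ) : ℤ) = (0 : ℤ) := by
          simp [hi]
        rw [he]; exact h0
      · have hjlt : (j : ℕ) < 2 * k + 1 := by
          have := i.isLt; omega
        have h1 : (((i.castSucc : Fin (m + 1 + 1)) : ℕ) : ℤ) = ((j : ℕ) : ℤ) + 1 := by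
          rw [Fin.coe_castSucc]; exact_mod_cast hij
        have h2 : (((j.castSucc : Fin (m + 1 + 1)) : ℕ) : ℤ) = ((j : ℕ) : ℤ) := by simp
        rw [h1, h2]; exact hadj (j : ℕ) hjlt
      · have h1 : ((c : ℕ) : ℤ) = ((2 * k + 1 : ℕ) : ℤ) := by
          simp only [hc, Fin.coe_castSucc, Fin.val_last, hm]
        have h2 : ((d : ℕ) : ℤ) = ((2 * k + 2 : ℕ) : ℤ) := by
          simp only [hd, Fin.val_last, hm]
        rw [h1, h2]; exact hlast
    · rintro ⟨⟨h0, hadj⟩, hlt⟩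
      refine ⟨?_, fun i hi => ?_, ?_⟩
      · have := h0 (⟨0, by omega⟩ : Fin (m + 1)) rfl
        simpa using this
      · have hi1 : i + 1 < m + 1 := by omega
        have hi2 : i < m + 1 := by omega
        have := hadj (⟨i + 1, hi1⟩ : Fin (m + 1)) (⟨i, hi2⟩ : Fin (m + 1)) rfl
        have e1 : ((((⟨i + 1, hi1⟩ : Fin (m + 1)).castSucc : Fin (m + 1 + 1)) : ℕ) : ℤ) =
            (i : ℤ) + 1 := by push_cast; simp
        have e2 : ((((⟨i, hi2⟩ : Fin (m + 1)).castSucc : Fin (m + 1 + 1)) : ℕ) : ℤ) =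
            (i : ℤ) := by push_cast; simp
        rw [e1, e2] at this; exact this
      · have h1 : ((c : ℕ) : ℤ) = ((2 * k + 1 : ℕ) : ℤ) := by
          simp only [hc, Fin.coe_castSucc, Fin.val_last, hm]
        have h2 : ((d : ℕ) : ℤ) = ((2 * k + 2 : ℕ) : ℤ) := by
          simp only [hd, Fin.val_last, hm]
        rw [h1, h2] at hlt; exact hlt
  -- P (B t k) = ν S
  have hPB : P (B t k) = ν S := by
    rw [hBeq, ← Measure.map_apply (measurable_proj (m + 1 + 1)) hSmeas,
      map_pi P hP (m + 1 + 1), hν]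
  -- measure of A1
  have hA1m : ν A1 = ENNReal.ofReal (t ^ (m + 1) / (Nat.factorial (m + 1))) :=
    measure_prefix_chain (m + 1) t ht
  have hchain : ν (chainSet t (m + 1 + 1)) =
      ENNReal.ofReal (t ^ (m + 1 + 1) / (Nat.factorial (m + 1 + 1))) :=
    chain_measure (m + 1 + 1) t ht
  -- ν (A1 \ S) = ν (chainSet t (m+2))
  have hdiag : ν {x : Fin (m + 1 + 1) → ℝ | x d = x c} = 0 := diag_null (m + 1) (Fin.last m)
  have hdiff : ν (A1 \ S) = ν (chainSet t (m + 1 + 1)) := by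
    apply le_antisymm
    · have hsub : A1 \ S ⊆ chainSet t (m + 1 + 1) ∪ {x | x d = x c} := by
        rintro x ⟨hx1, hx2⟩
        have hnot : ¬ x c < x d := fun h => hx2 ⟨hx1, h⟩
        rcases lt_or_eq_of_le (not_lt.mp hnot) with h | h
        · left; rw [chainSet_last]; exact ⟨hx1, h⟩
        · right; exact h
      calc ν (A1 \ S) ≤ ν (chainSet t (m + 1 + 1) ∪ {x | x d = x c}) := measure_mono hsub
        _ ≤ ν (chainSet t (m + 1 + 1)) + ν {x | x d = x c} := measure_union_le _ _
        _ = ν (chainSet t (m + 1 + 1)) := by rw [hdiag, add_zero]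
    · apply measure_mono
      rw [chainSet_last]
      rintro x ⟨hx1, hx2⟩
      have hx2' : x d < x c := hx2
      refine ⟨hx1, fun hx3 => ?_⟩
      have hx3' : x c < x d := hx3.2
      exact absurd hx3' (not_lt.mpr hx2'.le)
  -- additivity
  have htot : ν S + ν (A1 \ S) = ν A1 := by
    rw [measure_add_diff hSmeas.nullMeasurableSet A1, union_eq_right.mpr inter_subset_left]
  rw [hdiff, hchain, hA1m] at htot
  have hfin : ν S ≠ ⊤ := measure_ne_top ν S
  have h1 : (0:ℝ) ≤ t ^ (m + 1 + 1) / (Nat.factorial (m + 1 + 1)) :=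
    div_nonneg (pow_nonneg ht.1 _) (by positivity)
  have h2 : (0:ℝ) ≤ t ^ (m + 1) / (Nat.factorial (m + 1)) :=
    div_nonneg (pow_nonneg ht.1 _) (by positivity)
  have := congrArg ENNReal.toReal htot
  rw [ENNReal.toReal_add hfin ENNReal.ofReal_ne_top, ENNReal.toReal_ofReal h1,
    ENNReal.toReal_ofReal h2] at this
  obtain ⟨r, hr⟩ : ∃ r : ℝ, (ν S).toReal = r := ⟨_, rfl⟩
  rw [hr] at this
  rw [hPB, hr]
  rw [show m + 1 + 1 = 2 * k + 3 from by omega, show m + 1 = 2 * k + 2 from by omega] at this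
  linarith
end

section
/- For every real t and every integer r ≥ 2, ∑_{k=0}^{r−2} ∑_{l=0}^{r−k−2} [ t^{2l+2k+3}/((2l+1)!(2k+2)!) − t^{2l+2k+4}/((2l+1)!(2k+3)!) ] = −(1/2) ∑_{i=3}^{2r} (−2t)^i/i! − (1−t) ∑_{i=0}^{r−2} t^{2i+3}/(2i+3)!. -/
/-!
Group the double sum along the diagonals `k + l = n`. Since
`1 / ((2l+1)! (2k+2)!) = C(2n+3, 2k+2) / (2n+3)!` (and similarly for the second term), the `n`-th
diagonal contributes `(2^(2n+2) - 1) t^(2n+3) / (2n+3)! - (2^(2n+3) - (2n+4)) t^(2n+4) / (2n+4)!`,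
the even- and odd-indexed binomial sums having been computed by symmetry and Pascal's rule.
This is exactly the contribution of the indices `i = 2n+3, 2n+4` on the right-hand side.
-/

open Finset Nat

theorem Finset.sum_range_two_mul {M : Type*} [AddCommMonoid M] (f : ℕ → M) (m : ℕ) :
    ∑ j ∈ range (2 * m), f j = ∑ k ∈ range m, (f (2 * k) + f (2 * k + 1)) := by
  induction m with
  | zero => simp
  | succ m ih => rw [mul_add_one, sum_range_succ, sum_range_succ, sum_range_succ, ih, add_assoc]

theorem Nat.sum_range_choose_even_add_odd (m : ℕ) :
    ∑ k ∈ range (m + 1), ((2 * m + 1).choose (2 * k) + (2 * m + 1).choose (2 * k + 1)) =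
      2 ^ (2 * m + 1) := by
  rw [← sum_range_two_mul, ← sum_range_choose, mul_add_one]

theorem Nat.sum_range_choose_even_eq_odd (m : ℕ) :
    ∑ k ∈ range (m + 1), (2 * m + 1).choose (2 * k) =
      ∑ k ∈ range (m + 1), (2 * m + 1).choose (2 * k + 1) := by
  rw [← sum_range_reflect]
  refine sum_congr rfl fun k hk => ?_
  have hk : k ≤ m := Nat.lt_succ_iff.mp (mem_range.mp hk)
  rw [← choose_symm (by omega)]
  congr 1
  omega

theorem Nat.sum_range_choose_even (m : ℕ) :
    ∑ k ∈ range (m + 1), (2 * m + 1).choose (2 * k) = 2 ^ (2 * m) := by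
  have h := sum_range_choose_even_add_odd m
  rw [sum_add_distrib, ← sum_range_choose_even_eq_odd, pow_succ] at h
  omega

theorem Nat.sum_range_choose_odd (m : ℕ) :
    ∑ k ∈ range (m + 1), (2 * m + 2).choose (2 * k + 1) = 2 ^ (2 * m + 1) := by
  simp_rw [choose_succ_succ]
  exact sum_range_choose_even_add_odd m

theorem div_factorial_mul_factorial {K : Type*} [Field K] [CharZero K] (x : K) (a b : ℕ) :
    x / (a ! * b !) = (a + b).choose b * x / (a + b)! := by
  have : ((a + b)! : K) ≠ 0 := cast_ne_zero.2 (factorial_ne_zero _)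
  rw [← choose_symm_add, cast_add_choose]
  field_simp

theorem Nat.sum_range_choose_even_add_two (n : ℕ) :
    ∑ k ∈ range (n + 1), (2 * n + 3).choose (2 * k + 2) + 1 = 2 ^ (2 * n + 2) := by
  have h := sum_range_choose_even (n + 1)
  rw [sum_range_succ'] at h
  simpa only [mul_add_one, choose_zero_right, mul_zero] using h

theorem Nat.sum_range_choose_odd_add_three (n : ℕ) :
    ∑ k ∈ range (n + 1), (2 * n + 4).choose (2 * k + 3) + (2 * n + 4) = 2 ^ (2 * n + 3) := by
  have h := sum_range_choose_odd (n + 1)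
  rw [sum_range_succ'] at h
  simpa only [mul_add_one, add_assoc, choose_one_right, mul_zero, zero_add] using h

theorem antidiagonal_sum_eq (t : ℝ) (n : ℕ) :
    ∑ k ∈ range (n + 1),
        (t ^ (2 * (n - k) + 2 * k + 3) / ((2 * (n - k) + 1)! * (2 * k + 2)! : ℝ) -
          t ^ (2 * (n - k) + 2 * k + 4) / ((2 * (n - k) + 1)! * (2 * k + 3)! : ℝ)) =
      -(1 / 2) * ((-2 * t) ^ (2 * n + 3) / (2 * n + 3)! + (-2 * t) ^ (2 * n + 4) / (2 * n + 4)!) -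
        (1 - t) * (t ^ (2 * n + 3) / (2 * n + 3)!) := by
  have hterm : ∀ k ∈ range (n + 1),
      t ^ (2 * (n - k) + 2 * k + 3) / ((2 * (n - k) + 1)! * (2 * k + 2)! : ℝ) -
          t ^ (2 * (n - k) + 2 * k + 4) / ((2 * (n - k) + 1)! * (2 * k + 3)! : ℝ) =
        (2 * n + 3).choose (2 * k + 2) * t ^ (2 * n + 3) / (2 * n + 3)! -
          (2 * n + 4).choose (2 * k + 3) * t ^ (2 * n + 4) / (2 * n + 4)! := by
    intro k hk
    have hk : k ≤ n := Nat.lt_succ_iff.mp (mem_range.mp hk)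
    rw [div_factorial_mul_factorial, div_factorial_mul_factorial,
      show 2 * (n - k) + 1 + (2 * k + 2) = 2 * n + 3 by omega,
      show 2 * (n - k) + 1 + (2 * k + 3) = 2 * n + 4 by omega,
      show 2 * (n - k) + 2 * k + 3 = 2 * n + 3 by omega,
      show 2 * (n - k) + 2 * k + 4 = 2 * n + 4 by omega]
  have heven : (∑ k ∈ range (n + 1), (2 * n + 3).choose (2 * k + 2) : ℝ) = 2 ^ (2 * n + 2) - 1 := by
    rw [eq_sub_iff_add_eq]
    exact_mod_cast sum_range_choose_even_add_two n
  have hodd : (∑ k ∈ range (n + 1), (2 * n + 4).choose (2 * k + 3) : ℝ) =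
      2 ^ (2 * n + 3) - (2 * n + 4) := by
    rw [eq_sub_iff_add_eq]
    exact_mod_cast sum_range_choose_odd_add_three n
  have hfact : ((2 * n + 4)! : ℝ) = (2 * n + 4) * (2 * n + 3)! := by
    rw [show 2 * n + 4 = 2 * n + 3 + 1 by rfl, factorial_succ]
    push_cast
    ring
  rw [sum_congr rfl hterm, sum_sub_distrib, ← sum_div, ← sum_div, ← sum_mul, ← sum_mul,
    heven, hodd, mul_pow, mul_pow, Odd.neg_pow ⟨n + 1, by ring⟩, Even.neg_pow ⟨n + 2, by ring⟩,
    hfact]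
  field_simp
  ring

theorem double_sum_identity_general (t : ℝ) (r : ℕ) :
    ∑ k ∈ Finset.range (r - 1), ∑ l ∈ Finset.range (r - k - 1),
        (t ^ (2 * l + 2 * k + 3) /
            ((Nat.factorial (2 * l + 1) : ℝ) * (Nat.factorial (2 * k + 2))) -
          t ^ (2 * l + 2 * k + 4) /
            ((Nat.factorial (2 * l + 1) : ℝ) * (Nat.factorial (2 * k + 3)))) =
      -(1 / 2) * ∑ i ∈ Finset.Icc 3 (2 * r), (-2 * t) ^ i / (Nat.factorial i) -
        (1 - t) * ∑ i ∈ Finset.range (r - 1), t ^ (2 * i + 3) / (Nat.factorial (2 * i + 3)) := by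
  have hpairs : ∑ i ∈ Icc 3 (2 * r), (-2 * t) ^ i / (i ! : ℝ) =
      ∑ n ∈ range (r - 1),
        ((-2 * t) ^ (2 * n + 3) / (2 * n + 3)! + (-2 * t) ^ (2 * n + 4) / (2 * n + 4)!) := by
    rw [← Ico_add_one_right_eq_Icc, sum_Ico_eq_sum_range, show 2 * r + 1 - 3 = 2 * (r - 1) by omega,
      sum_range_two_mul]
    simp only [add_comm 3, add_assoc]
  simp_rw [Nat.sub_right_comm r _ 1]
  rw [← sum_range_diag_flip, hpairs, mul_sum, mul_sum, ← sum_sub_distrib]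
  exact sum_congr rfl fun n _ => antidiagonal_sum_eq t n

theorem double_sum_identity (t : ℝ) (r : ℕ) (hr : 2 ≤ r) :
    ∑ k ∈ Finset.range (r - 1), ∑ l ∈ Finset.range (r - k - 1),
        (t ^ (2 * l + 2 * k + 3) /
            ((Nat.factorial (2 * l + 1) : ℝ) * (Nat.factorial (2 * k + 2))) -
          t ^ (2 * l + 2 * k + 4) /
            ((Nat.factorial (2 * l + 1) : ℝ) * (Nat.factorial (2 * k + 3)))) =
      -(1 / 2) * ∑ i ∈ Finset.Icc 3 (2 * r), (-2 * t) ^ i / (Nat.factorial i) -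
        (1 - t) * ∑ i ∈ Finset.range (r - 1), t ^ (2 * i + 3) / (Nat.factorial (2 * i + 3)) :=
  double_sum_identity_general t r
end
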